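/- arXiv:2402.17720 — 10 statements merged into one kernel-verified Lean document; each statement's English description precedes it below -/
import Mathlib

section
/- In the binary prediction setting, consider the FTL predictor defined for y ∈ {0,1}^n by a_t(y_1,…,y_{t−1}) := 1 if ∑_{i=1}^{t−1} y_i > (t−1)/2, := 0 if ∑_{i=1}^{t−1} y_i < (t−1)/2, and := 1/2 if ∑_{i=1}^{t−1} y_i = (t−1)/2. Then for every y ∈ {0,1}^n and every 1 ≤ t ≤ n, the regret of this predictor on the length-t prefix, namely ∑_{i=1}^t |a_i(y_1,…,y_{i−1}) − y_i| − min{∑_{i=1}^t y_i, t − ∑_{i=1}^t y_i}, equals (1/2)·c(y_1,…,y_{t−1}); in particular its regret on the full sequence equals (1/2)·c(y_1,…,y_{n−1}). -/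
/-- **FTL regret in binary prediction equals half the number of lead changes.**
For bits `y i ∈ {0,1}` (indexed `i = 1, …, n`), the FTL predictor plays `1` if the
majority of the first `t-1` bits is `1`, `0` if it is `0`, and `1/2` on ties.  For
every `1 ≤ t ≤ n`, its regret on the length-`t` prefix equals `(1/2) · c(y₁,…,y_{t-1})`,
where `c` counts the indices `0 ≤ j ≤ t-1` with `∑_{i=1}^j y_i = ∑_{i=1}^j (1 - y_i)`. -/
theorem ftl_binary_regret_eq_half_lead_changes
    (n : ℕ) (hn : 1 ≤ n) (y : ℕ → ℕ) (hy : ∀ i, y i ≤ 1)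
    (a : ℕ → ℝ)
    (ha : ∀ t, a t =
      if t - 1 < 2 * ∑ i ∈ Finset.Icc 1 (t - 1), y i then 1
      else if 2 * ∑ i ∈ Finset.Icc 1 (t - 1), y i < t - 1 then 0 else 1 / 2)
    (t : ℕ) (ht : t ∈ Finset.Icc 1 n) :
    (∑ i ∈ Finset.Icc 1 t, |a i - (y i : ℝ)|)
        - min ((∑ i ∈ Finset.Icc 1 t, y i : ℕ) : ℝ)
            ((t : ℝ) - (∑ i ∈ Finset.Icc 1 t, y i : ℕ))
      = (1 / 2) * (((Finset.range t).filter
          (fun j => 2 * ∑ i ∈ Finset.Icc 1 j, y i = j)).card : ℝ) := by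
  clear ht hn
  induction t with
  | zero => simp
  | succ t ih =>
    have hs : (∑ i ∈ Finset.Icc 1 t, y i) ≤ t := by
      calc (∑ i ∈ Finset.Icc 1 t, y i) ≤ ∑ i ∈ Finset.Icc 1 t, 1 :=
            Finset.sum_le_sum fun i _ => hy i
        _ = t := by simp
    have haval := ha (t + 1)
    simp only [Nat.add_sub_cancel] at haval
    rw [Finset.sum_Icc_succ_top (by omega : 1 ≤ t + 1),
        Finset.sum_Icc_succ_top (by omega : 1 ≤ t + 1),
        Finset.range_add_one, Finset.filter_insert]
    set s := ∑ i ∈ Finset.Icc 1 t, y i with hsdef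
    rcases Nat.lt_trichotomy (2 * s) t with h | h | h
    · -- minority of ones: a (t+1) = 0
      rw [if_neg (by omega), if_pos h] at haval
      rw [if_neg (by omega)]
      have hR : (2 * s : ℝ) + 1 ≤ t := by exact_mod_cast h
      rw [min_eq_left (by push_cast; linarith)] at ih
      rcases Nat.le_one_iff_eq_zero_or_eq_one.mp (hy (t + 1)) with hb | hb
      · rw [haval, hb]; push_cast
        rw [min_eq_left (by linarith)]; simp; linarith
      · rw [haval, hb]; push_cast
        rw [min_eq_left (by linarith)]
        rw [show |(0:ℝ) - 1| = 1 by norm_num]; linarith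
    · -- tie: a (t+1) = 1/2
      rw [if_neg (by omega), if_neg (by omega)] at haval
      rw [if_pos h, Finset.card_insert_of_notMem (by simp)]
      have hR : (2 * s : ℝ) = t := by exact_mod_cast h
      rw [min_eq_left (by push_cast; linarith)] at ih
      rcases Nat.le_one_iff_eq_zero_or_eq_one.mp (hy (t + 1)) with hb | hb
      · rw [haval, hb]; push_cast
        rw [min_eq_left (by linarith)]
        rw [show |(1:ℝ)/2 - 0| = 1/2 by norm_num]; push_cast; linarith
      · rw [haval, hb]; push_cast
        rw [min_eq_right (by linarith)]
        rw [show |(1:ℝ)/2 - 1| = 1/2 by norm_num]; push_cast; linarith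
    · -- majority of ones: a (t+1) = 1
      rw [if_pos h] at haval
      rw [if_neg (by omega)]
      have hR : (t : ℝ) + 1 ≤ 2 * s := by exact_mod_cast h
      rw [min_eq_right (by push_cast; linarith)] at ih
      rcases Nat.le_one_iff_eq_zero_or_eq_one.mp (hy (t + 1)) with hb | hb
      · rw [haval, hb]; push_cast
        rw [min_eq_right (by linarith)]
        rw [show |(1:ℝ) - 0| = 1 by norm_num]; linarith
      · rw [haval, hb]; push_cast
        rw [min_eq_right (by linarith)]; simp; linarith
end

section
/- In the general online learning setting with 0 ≤ ℓ_t(a) ≤ 1 for all t and a, fix a threshold θ ≥ 0 and let t_sw := min{1 ≤ t ≤ n−1 : Σ_t > θ}, with t_sw := n if no such t exists. Let (a_1, …, a_n) be any action sequence with a_t = a*_{t−1} for all t ≤ t_sw (the actions a_t for t > t_sw are arbitrary). Then Reg ≤ [∑_{t=1}^{t_sw} ℓ_t(a*_{t−1}) − L_{t_sw}(a*_{t_sw})] + [∑_{t=t_sw+1}^n ℓ_t(a_t) − inf_{a∈A} ∑_{t=t_sw+1}^n ℓ_t(a)], and moreover the first bracketed term is at most θ + 1. -/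
/-!
Up to the switch the learner plays FTL, so its regret on rounds `1, …, t_sw` telescopes to the
anytime FTL regret `Σ_{t_sw}`; on the remaining rounds `a*_n` is one admissible comparator, and
`L_{t_sw}(a*_{t_sw}) ≤ L_{t_sw}(a*_n)`, which gives the decomposition. Since `t_sw` is the first
crossing, `Σ_{t_sw - 1} ≤ θ`, and a single FTL increment `L_t(a*_{t-1}) - L_t(a*_t)` is at most
`ℓ_t(a*_{t-1}) - ℓ_t(a*_t) ≤ 1` because `a*_{t-1}` leads at time `t - 1`.
-/

open Finset

theorem Finset.sum_Icc_one_add_sum_Icc_succ {M : Type*} [AddCommMonoid M] (f : ℕ → M)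
    {m n : ℕ} (hmn : m ≤ n) :
    ∑ i ∈ Icc 1 m, f i + ∑ i ∈ Icc (m + 1) n, f i = ∑ i ∈ Icc 1 n, f i := by
  simpa only [← Icc_add_one_left_eq_Ioc, zero_add] using sum_Ioc_consecutive f m.zero_le hmn

namespace OnlineLearning

variable {A : Type*} (ℓ : ℕ → A → ℝ)

def cumLoss (t : ℕ) (a : A) : ℝ := ∑ i ∈ Icc 1 t, ℓ i a

def ftlRegret (b : ℕ → A) (t : ℕ) : ℝ :=
  ∑ i ∈ Icc 1 t, (cumLoss ℓ i (b (i - 1)) - cumLoss ℓ i (b i))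

variable {ℓ}

@[simp]
theorem cumLoss_zero (a : A) : cumLoss ℓ 0 a = 0 := by
  simp [cumLoss]

theorem cumLoss_succ (t : ℕ) (a : A) : cumLoss ℓ (t + 1) a = cumLoss ℓ t a + ℓ (t + 1) a :=
  sum_Icc_succ_top (by omega) _

@[simp]
theorem ftlRegret_zero (b : ℕ → A) : ftlRegret ℓ b 0 = 0 := by
  simp [ftlRegret]

theorem ftlRegret_succ (b : ℕ → A) (t : ℕ) :
    ftlRegret ℓ b (t + 1) =
      ftlRegret ℓ b t + (cumLoss ℓ (t + 1) (b t) - cumLoss ℓ (t + 1) (b (t + 1))) :=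
  sum_Icc_succ_top (by omega) _

theorem sum_loss_prev_sub_cumLoss (b : ℕ → A) (t : ℕ) :
    ∑ i ∈ Icc 1 t, ℓ i (b (i - 1)) - cumLoss ℓ t (b t) = ftlRegret ℓ b t := by
  induction t with
  | zero => simp
  | succ t ih =>
    rw [sum_Icc_succ_top (by omega), ftlRegret_succ, ← ih, Nat.add_sub_cancel]
    simp only [cumLoss_succ]
    ring

theorem cumLoss_sub_cumLoss_le_of_leader {b : ℕ → A} {t : ℕ}
    (hlead : cumLoss ℓ t (b t) ≤ cumLoss ℓ t (b (t + 1))) :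
    cumLoss ℓ (t + 1) (b t) - cumLoss ℓ (t + 1) (b (t + 1)) ≤
      ℓ (t + 1) (b t) - ℓ (t + 1) (b (t + 1)) := by
  rw [cumLoss_succ, cumLoss_succ]
  linarith

theorem ftlRegret_succ_le_add_one {b : ℕ → A} {t : ℕ}
    (hlead : cumLoss ℓ t (b t) ≤ cumLoss ℓ t (b (t + 1)))
    (hle : ℓ (t + 1) (b t) ≤ 1) (hnonneg : 0 ≤ ℓ (t + 1) (b (t + 1))) :
    ftlRegret ℓ b (t + 1) ≤ ftlRegret ℓ b t + 1 := by
  rw [ftlRegret_succ]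
  linarith [cumLoss_sub_cumLoss_le_of_leader hlead]

theorem regret_le_add_regret_tail {m n : ℕ} (hmn : m ≤ n) (a : ℕ → A) {c d : A}
    (hd : cumLoss ℓ m d ≤ cumLoss ℓ m c)
    (hbdd : BddBelow (Set.range fun a' => ∑ t ∈ Icc (m + 1) n, ℓ t a')) :
    ∑ t ∈ Icc 1 n, ℓ t (a t) - cumLoss ℓ n c ≤
      (∑ t ∈ Icc 1 m, ℓ t (a t) - cumLoss ℓ m d) +
        (∑ t ∈ Icc (m + 1) n, ℓ t (a t) - ⨅ a', ∑ t ∈ Icc (m + 1) n, ℓ t a') := by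
  have hinf := ciInf_le hbdd c
  have hplay := sum_Icc_one_add_sum_Icc_succ (fun t => ℓ t (a t)) hmn
  have hcomp := sum_Icc_one_add_sum_Icc_succ (fun t => ℓ t c) hmn
  unfold cumLoss at hd ⊢
  linarith

end OnlineLearning

open OnlineLearning in
theorem smart_switch_regret_decomposition_general
    {A : Type*} (n : ℕ)
    (ℓ : ℕ → A → ℝ)
    (hℓ : ∀ t ∈ Finset.Icc 1 n, ∀ a : A, ℓ t a ∈ Set.Icc (0 : ℝ) 1)
    (astar : ℕ → A)
    (hmin : ∀ t ∈ Finset.Icc 1 n, ∀ a : A,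
      ∑ i ∈ Finset.Icc 1 t, ℓ i (astar t) ≤ ∑ i ∈ Finset.Icc 1 t, ℓ i a)
    (Sg : ℕ → ℝ)
    (hSg : ∀ t, Sg t = ∑ i ∈ Finset.Icc 1 t,
        ((∑ j ∈ Finset.Icc 1 i, ℓ j (astar (i - 1))) - ∑ j ∈ Finset.Icc 1 i, ℓ j (astar i)))
    (θ : ℝ) (hθ : 0 ≤ θ)
    (tsw : ℕ) (htsw1 : 1 ≤ tsw) (htsw2 : tsw ≤ n)
    (htsw3 : ∀ t, 1 ≤ t → t < tsw → Sg t ≤ θ)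
    (a : ℕ → A) (ha : ∀ t ∈ Finset.Icc 1 tsw, a t = astar (t - 1)) :
    ((∑ t ∈ Finset.Icc 1 n, ℓ t (a t)) - ∑ i ∈ Finset.Icc 1 n, ℓ i (astar n)
      ≤ ((∑ t ∈ Finset.Icc 1 tsw, ℓ t (astar (t - 1)))
            - ∑ i ∈ Finset.Icc 1 tsw, ℓ i (astar tsw))
        + ((∑ t ∈ Finset.Icc (tsw + 1) n, ℓ t (a t))
            - ⨅ a' : A, ∑ t ∈ Finset.Icc (tsw + 1) n, ℓ t a'))
    ∧ (∑ t ∈ Finset.Icc 1 tsw, ℓ t (astar (t - 1)))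
        - ∑ i ∈ Finset.Icc 1 tsw, ℓ i (astar tsw) ≤ θ + 1 := by
  have hbdd : BddBelow (Set.range fun a' => ∑ t ∈ Icc (tsw + 1) n, ℓ t a') :=
    ⟨0, by
      rintro _ ⟨a', rfl⟩
      exact sum_nonneg fun t ht => (hℓ t (Icc_subset_Icc (by omega) le_rfl ht) a').1⟩
  have hplay : ∑ t ∈ Icc 1 tsw, ℓ t (a t) = ∑ t ∈ Icc 1 tsw, ℓ t (astar (t - 1)) :=
    sum_congr rfl fun t ht => by rw [ha t ht]
  have hlead := hmin tsw (mem_Icc.2 ⟨htsw1, htsw2⟩) (astar n)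
  refine ⟨hplay ▸ regret_le_add_regret_tail htsw2 a hlead hbdd, ?_⟩
  have hSg' : ∀ t, Sg t = ftlRegret ℓ astar t := hSg
  obtain ⟨s, rfl⟩ : ∃ s, tsw = s + 1 := ⟨tsw - 1, by omega⟩
  have hprev : ftlRegret ℓ astar s ≤ θ ∧
      cumLoss ℓ s (astar s) ≤ cumLoss ℓ s (astar (s + 1)) := by
    rcases Nat.eq_zero_or_pos s with rfl | hs
    · simpa using hθ
    · exact ⟨hSg' s ▸ htsw3 s hs s.lt_succ_self, hmin s (mem_Icc.2 ⟨hs, by omega⟩) _⟩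
  have hround := hℓ (s + 1) (mem_Icc.2 ⟨by omega, htsw2⟩)
  have hstep := ftlRegret_succ_le_add_one hprev.2 (hround _).2 (hround _).1
  rw [← cumLoss, sum_loss_prev_sub_cumLoss]
  linarith [hprev.1]

/-- **SMART switching lemma.** In the general online learning setting with losses in
`[0,1]`, let `Sg t` be the anytime FTL regret `∑_{i=1}^t (L i (astar (i-1)) - L i (astar i))`,
let `θ ≥ 0`, and let `tsw` be the first `1 ≤ t ≤ n-1` with `Sg t > θ` (and `tsw = n` if
no such `t` exists).  For any action sequence playing FTL up to round `tsw`, the regret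
is at most `[∑_{t=1}^{tsw} ℓ t (astar (t-1)) - L tsw (astar tsw)]` plus the regret of
the post-switch play against the best fixed action for rounds `tsw+1, …, n`; moreover
the first bracketed term is at most `θ + 1`. -/
theorem smart_switch_regret_decomposition
    {A : Type*} [Nonempty A] (n : ℕ) (hn : 1 ≤ n)
    (ℓ : ℕ → A → ℝ)
    (hℓ : ∀ t ∈ Finset.Icc 1 n, ∀ a : A, ℓ t a ∈ Set.Icc (0 : ℝ) 1)
    (astar : ℕ → A)
    (hmin : ∀ t ∈ Finset.Icc 1 n, ∀ a : A,
      ∑ i ∈ Finset.Icc 1 t, ℓ i (astar t) ≤ ∑ i ∈ Finset.Icc 1 t, ℓ i a)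
    (Sg : ℕ → ℝ)
    (hSg : ∀ t, Sg t = ∑ i ∈ Finset.Icc 1 t,
        ((∑ j ∈ Finset.Icc 1 i, ℓ j (astar (i - 1))) - ∑ j ∈ Finset.Icc 1 i, ℓ j (astar i)))
    (θ : ℝ) (hθ : 0 ≤ θ)
    (tsw : ℕ) (htsw1 : 1 ≤ tsw) (htsw2 : tsw ≤ n)
    (htsw3 : ∀ t, 1 ≤ t → t < tsw → Sg t ≤ θ)
    (htsw4 : tsw < n → θ < Sg tsw)
    (a : ℕ → A) (ha : ∀ t ∈ Finset.Icc 1 tsw, a t = astar (t - 1)) :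
    ((∑ t ∈ Finset.Icc 1 n, ℓ t (a t)) - ∑ i ∈ Finset.Icc 1 n, ℓ i (astar n)
      ≤ ((∑ t ∈ Finset.Icc 1 tsw, ℓ t (astar (t - 1)))
            - ∑ i ∈ Finset.Icc 1 tsw, ℓ i (astar tsw))
        + ((∑ t ∈ Finset.Icc (tsw + 1) n, ℓ t (a t))
            - ⨅ a' : A, ∑ t ∈ Finset.Icc (tsw + 1) n, ℓ t a'))
    ∧ (∑ t ∈ Finset.Icc 1 tsw, ℓ t (astar (t - 1)))
        - ∑ i ∈ Finset.Icc 1 tsw, ℓ i (astar tsw) ≤ θ + 1 :=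
  smart_switch_regret_decomposition_general n ℓ hℓ astar hmin Sg hSg θ hθ tsw htsw1 htsw2 htsw3 a ha
end

section
/- Regret of SMART with randomized threshold: in the general online learning setting with 0 ≤ ℓ_t(a) ≤ 1 for all t and a, let g : ℕ → ℝ be monotone nondecreasing with g(k) ≥ 0 for all k and g(n) > 0. Let b be a fixed map from finite tuples of loss functions on A to A such that for every 0 ≤ s ≤ n−1, ∑_{t=s+1}^n ℓ_t(b(ℓ_{s+1}, …, ℓ_{t−1})) − inf_{a∈A} ∑_{t=s+1}^n ℓ_t(a) ≤ g(n − s). For u ∈ [0,1] set θ(u) := g(n)·ln(1 + (e−1)u), let t_sw(u) := min{1 ≤ t ≤ n−1 : Σ_t > θ(u)} (with t_sw(u) := n if no such t exists), and let the action sequence a(u) be given by a_t(u) = a*_{t−1} for t ≤ t_sw(u) and a_t(u) = b(ℓ_{t_sw(u)+1}, …, ℓ_{t−1}) for t > t_sw(u). Then ∫_0^1 Reg(a(u)) du ≤ (e/(e−1))·min{Σ_n, g(n)} + 1, where Reg(a(u)) := ∑_{t=1}^n ℓ_t(a_t(u)) − L_n(a*_n). -/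
/-!
The increments `L_t(a*_{t-1}) - L_t(a*_t)` of the anytime FTL regret `Σ` lie in `[0, 1]`: `a*_t`
minimises `L_t`, while `a*_{t-1}` minimises `L_{t-1}`, which differs from `L_t` by one loss in
`[0, 1]`. So `Σ` is nondecreasing and exceeds the threshold by at most one at the switching round.
Hence the regret of `a(u)` is `Σ_n` when `θ(u) ≥ Σ_n` (no switch), and at most
`θ(u) + 1 + g(n)` in general: the backup is compared with the best action on the remaining rounds,
which does no worse there than `a*_n`.

With `m = min(Σ_n, g(n))` and `θ(u₀) = m`, integrating `θ(u) + g(n) + 1` over `[0, u₀]` and `Σ_n`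
over `[u₀, 1]` gives at most `e m/(e-1) + 1`, by `∫₀^c ln(1 + ku) du = ((1 + kc) ln(1 + kc) - kc)/k`.
-/

open Finset Real

section FollowTheLeader

variable {A : Type*} (ℓ : ℕ → A → ℝ) (astar : ℕ → A)

def cumLoss (t : ℕ) (a : A) : ℝ := ∑ i ∈ Icc 1 t, ℓ i a

def ftlRegret (t : ℕ) : ℝ :=
  ∑ i ∈ Icc 1 t, (cumLoss ℓ i (astar (i - 1)) - cumLoss ℓ i (astar i))

def regret (n : ℕ) (a : ℕ → A) : ℝ := ∑ t ∈ Icc 1 n, ℓ t (a t) - cumLoss ℓ n (astar n)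

variable {ℓ astar} {n : ℕ}

lemma sum_Icc_one_eq_add_sum_Icc (f : ℕ → ℝ) {s : ℕ} (hs : s ≤ n) :
    ∑ t ∈ Icc 1 n, f t = ∑ t ∈ Icc 1 s, f t + ∑ t ∈ Icc (s + 1) n, f t := by
  rw [Icc_add_one_left_eq_Ioc]
  exact (sum_Ioc_consecutive _ (Nat.zero_le s) hs).symm

lemma cumLoss_succ (t : ℕ) (a : A) : cumLoss ℓ (t + 1) a = cumLoss ℓ t a + ℓ (t + 1) a :=
  sum_Icc_succ_top (by omega) _

@[simp]
lemma ftlRegret_zero : ftlRegret ℓ astar 0 = 0 := by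
  simp [ftlRegret]

lemma ftlRegret_succ (t : ℕ) :
    ftlRegret ℓ astar (t + 1) =
      ftlRegret ℓ astar t + (cumLoss ℓ (t + 1) (astar t) - cumLoss ℓ (t + 1) (astar (t + 1))) :=
  sum_Icc_succ_top (by omega) _

theorem sum_loss_ftl_eq (m : ℕ) :
    ∑ t ∈ Icc 1 m, ℓ t (astar (t - 1)) = ftlRegret ℓ astar m + cumLoss ℓ m (astar m) := by
  induction m with
  | zero => simp [cumLoss]
  | succ m ih =>
    rw [sum_Icc_succ_top (by omega), ih, ftlRegret_succ, cumLoss_succ, Nat.add_sub_cancel]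
    ring

lemma cumLoss_leader_le (hmin : ∀ t ∈ Icc 1 n, ∀ a, cumLoss ℓ t (astar t) ≤ cumLoss ℓ t a)
    {m : ℕ} (hm : m ≤ n) (a : A) : cumLoss ℓ m (astar m) ≤ cumLoss ℓ m a := by
  rcases m.eq_zero_or_pos with rfl | hm0
  · simp [cumLoss]
  · exact hmin m (mem_Icc.2 ⟨hm0, hm⟩) a

lemma ftlRegret_mono (hmin : ∀ t ∈ Icc 1 n, ∀ a, cumLoss ℓ t (astar t) ≤ cumLoss ℓ t a)
    {s t : ℕ} (hst : s ≤ t) (htn : t ≤ n) : ftlRegret ℓ astar s ≤ ftlRegret ℓ astar t :=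
  sum_le_sum_of_subset_of_nonneg (Icc_subset_Icc_right hst) fun i hi _ ↦
    sub_nonneg.2 <| hmin i (mem_Icc.2 ⟨(mem_Icc.1 hi).1, (mem_Icc.1 hi).2.trans htn⟩) _

lemma ftlRegret_succ_le (hℓ : ∀ t ∈ Icc 1 n, ∀ a, ℓ t a ∈ Set.Icc (0 : ℝ) 1)
    (hmin : ∀ t ∈ Icc 1 n, ∀ a, cumLoss ℓ t (astar t) ≤ cumLoss ℓ t a)
    {m : ℕ} (hm : m + 1 ≤ n) : ftlRegret ℓ astar (m + 1) ≤ ftlRegret ℓ astar m + 1 := by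
  have hlead := cumLoss_leader_le hmin (by omega : m ≤ n) (astar (m + 1))
  have hm' : m + 1 ∈ Icc 1 n := mem_Icc.2 ⟨by omega, hm⟩
  have hold := (hℓ (m + 1) hm' (astar m)).2
  have hnew := (hℓ (m + 1) hm' (astar (m + 1))).1
  rw [ftlRegret_succ, cumLoss_succ, cumLoss_succ]
  linarith

lemma ftlRegret_le_add_one_of_forall_lt (hℓ : ∀ t ∈ Icc 1 n, ∀ a, ℓ t a ∈ Set.Icc (0 : ℝ) 1)
    (hmin : ∀ t ∈ Icc 1 n, ∀ a, cumLoss ℓ t (astar t) ≤ cumLoss ℓ t a)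
    {s : ℕ} (hs : s ∈ Icc 1 n) {θ : ℝ} (hθ : 0 ≤ θ)
    (hbelow : ∀ t, 1 ≤ t → t < s → ftlRegret ℓ astar t ≤ θ) :
    ftlRegret ℓ astar s ≤ θ + 1 := by
  obtain ⟨m, rfl⟩ : ∃ m, s = m + 1 := ⟨s - 1, by grind⟩
  have hm : ftlRegret ℓ astar m ≤ θ := by
    rcases m.eq_zero_or_pos with rfl | hm0
    · simpa using hθ
    · exact hbelow m hm0 (by omega)
  linarith [ftlRegret_succ_le hℓ hmin (mem_Icc.1 hs).2]

theorem regret_eq_ftlRegret {a : ℕ → A} (ha : ∀ t ≤ n, a t = astar (t - 1)) :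
    regret ℓ astar n a = ftlRegret ℓ astar n := by
  rw [regret, sum_congr rfl fun t ht ↦ by rw [ha t (mem_Icc.1 ht).2], sum_loss_ftl_eq]
  ring

theorem regret_le_ftlRegret_add (hℓ : ∀ t ∈ Icc 1 n, ∀ a, 0 ≤ ℓ t a)
    (hmin : ∀ t ∈ Icc 1 n, ∀ a, cumLoss ℓ t (astar t) ≤ cumLoss ℓ t a)
    {s : ℕ} (hs : s ≤ n) {a : ℕ → A} (ha : ∀ t ≤ s, a t = astar (t - 1)) :
    regret ℓ astar n a ≤ ftlRegret ℓ astar s +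
      (∑ t ∈ Icc (s + 1) n, ℓ t (a t) - ⨅ a' : A, ∑ t ∈ Icc (s + 1) n, ℓ t a') := by
  have hftl : ∑ t ∈ Icc 1 s, ℓ t (a t) = ftlRegret ℓ astar s + cumLoss ℓ s (astar s) := by
    rw [sum_congr rfl fun t ht ↦ by rw [ha t (mem_Icc.1 ht).2], sum_loss_ftl_eq]
  have hinf : (⨅ a' : A, ∑ t ∈ Icc (s + 1) n, ℓ t a') ≤ ∑ t ∈ Icc (s + 1) n, ℓ t (astar n) := by
    refine ciInf_le ⟨0, ?_⟩ _
    rintro _ ⟨a', rfl⟩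
    exact sum_nonneg fun t ht ↦ hℓ t (mem_Icc.2 ⟨by grind, (mem_Icc.1 ht).2⟩) a'
  have hlead := cumLoss_leader_le hmin hs (astar n)
  rw [regret, cumLoss, sum_Icc_one_eq_add_sum_Icc _ hs, sum_Icc_one_eq_add_sum_Icc _ hs, hftl]
  unfold cumLoss at hlead ⊢
  linarith

end FollowTheLeader

section LogarithmicThreshold

open MeasureTheory

lemma intervalIntegrable_log_one_add_mul {k : ℝ} (hk : k ≠ 0) (a b : ℝ) :
    IntervalIntegrable (fun u ↦ log (1 + k * u)) volume a b := by
  simpa [hk] using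
    ((intervalIntegral.intervalIntegrable_log' (a := 1 + k * a) (b := 1 + k * b)).comp_add_left
      1).comp_mul_left (c := k)

lemma integral_log_one_add_mul {k : ℝ} (hk : k ≠ 0) (c : ℝ) :
    ∫ u in (0 : ℝ)..c, log (1 + k * u) = ((1 + k * c) * log (1 + k * c) - k * c) / k := by
  rw [intervalIntegral.integral_comp_add_mul (fun x ↦ log x) hk, integral_log]
  simp only [mul_zero, add_zero, log_one, sub_zero, smul_eq_mul]
  field_simp
  ring

theorem integral_le_of_split_bounds {R : ℝ → ℝ} {k G S c : ℝ} (hk : k ≠ 0)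
    (hc0 : 0 ≤ c) (hc1 : c ≤ 1) (hR : IntervalIntegrable R volume 0 1)
    (hhead : ∀ u ∈ Set.Ioo 0 c, R u ≤ G * log (1 + k * u) + G + 1)
    (htail : ∀ u ∈ Set.Ioo c 1, R u ≤ S) :
    ∫ u in (0 : ℝ)..1, R u ≤
      G * (((1 + k * c) * log (1 + k * c) - k * c) / k) + (G + 1) * c + (1 - c) * S := by
  have hR₁ : IntervalIntegrable R volume 0 c :=
    hR.mono_set (by simp [Set.uIcc_of_le, hc0, Set.Icc_subset_Icc_right hc1])
  have hR₂ : IntervalIntegrable R volume c 1 :=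
    hR.mono_set (by simp [Set.uIcc_of_le, hc1, Set.Icc_subset_Icc_left hc0])
  have hB : IntervalIntegrable (fun u ↦ G * log (1 + k * u) + G) volume 0 c :=
    ((intervalIntegrable_log_one_add_mul hk 0 c).const_mul G).add intervalIntegrable_const
  have hhead' := intervalIntegral.integral_mono_on_of_le_Ioo hc0 hR₁
    (hB.add intervalIntegrable_const) hhead
  have htail' := intervalIntegral.integral_mono_on_of_le_Ioo hc1 hR₂ intervalIntegrable_const htail
  rw [intervalIntegral.integral_add hB intervalIntegrable_const,
    intervalIntegral.integral_add ((intervalIntegrable_log_one_add_mul hk 0 c).const_mul G)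
      intervalIntegrable_const,
    intervalIntegral.integral_const_mul, integral_log_one_add_mul hk,
    intervalIntegral.integral_const, intervalIntegral.integral_const] at hhead'
  rw [intervalIntegral.integral_const] at htail'
  rw [← intervalIntegral.integral_add_adjacent_intervals hR₁ hR₂]
  simp only [smul_eq_mul, sub_zero] at hhead' htail'
  linarith

lemma exp_one_sub_one_pos : 0 < exp 1 - 1 := by
  linarith [add_one_lt_exp one_ne_zero]

theorem integral_le_of_log_bound {R : ℝ → ℝ} {G : ℝ} (hR : IntervalIntegrable R volume 0 1)
    (hbound : ∀ u ∈ Set.Icc (0 : ℝ) 1, R u ≤ G * log (1 + (exp 1 - 1) * u) + G + 1) :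
    ∫ u in (0 : ℝ)..1, R u ≤ exp 1 / (exp 1 - 1) * G + 1 := by
  have := integral_le_of_split_bounds (S := 0) exp_one_sub_one_pos.ne' zero_le_one le_rfl hR
    (fun u hu ↦ hbound u (Set.Ioo_subset_Icc_self hu)) (fun u hu ↦ absurd hu.2 hu.1.not_gt)
  rw [show 1 + (exp 1 - 1) * 1 = exp 1 by ring, log_exp] at this
  calc _ ≤ _ := this
    _ = _ := by field_simp [exp_one_sub_one_pos.ne']; ring

theorem integral_le_of_log_bound_of_threshold_bound {R : ℝ → ℝ} {G S : ℝ} (hG : 0 < G)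
    (hS : 0 ≤ S) (hSG : S ≤ G) (hR : IntervalIntegrable R volume 0 1)
    (hbound : ∀ u ∈ Set.Icc (0 : ℝ) 1, R u ≤ G * log (1 + (exp 1 - 1) * u) + G + 1)
    (htail : ∀ u ∈ Set.Icc (0 : ℝ) 1, S ≤ G * log (1 + (exp 1 - 1) * u) → R u ≤ S) :
    ∫ u in (0 : ℝ)..1, R u ≤ exp 1 / (exp 1 - 1) * S + 1 := by
  have hk := exp_one_sub_one_pos
  set Y := exp (S / G)
  have hY1 : 1 ≤ Y := one_le_exp (div_nonneg hS hG.le)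
  have hYe : Y ≤ exp 1 := exp_le_exp.2 ((div_le_one hG).2 hSG)
  -- the split point `c` is where the threshold `G * log (1 + (e - 1) c)` reaches `S`
  set c := (Y - 1) / (exp 1 - 1)
  have hc0 : 0 ≤ c := div_nonneg (by linarith) hk.le
  have hc1 : c ≤ 1 := (div_le_one hk).2 (by linarith)
  have hkc : 1 + (exp 1 - 1) * c = Y := by rw [mul_div_cancel₀ _ hk.ne']; ring
  have htail' : ∀ u ∈ Set.Ioo c 1, R u ≤ S := by
    refine fun u hu ↦ htail u ⟨hc0.trans hu.1.le, hu.2.le⟩ ?_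
    have := log_le_log (exp_pos _) (by nlinarith [hu.1] : Y ≤ 1 + (exp 1 - 1) * u)
    rw [log_exp, div_le_iff₀ hG] at this
    linarith
  have := integral_le_of_split_bounds hk.ne' hc0 hc1 hR
    (fun u hu ↦ hbound u ⟨hu.1.le, hu.2.le.trans hc1⟩) htail'
  rw [hkc, log_exp] at this
  have hslack : exp 1 / (exp 1 - 1) * S + 1 -
      (G * ((Y * (S / G) - (exp 1 - 1) * c) / (exp 1 - 1)) + (G + 1) * c + (1 - c) * S) =
      (exp 1 - Y) / (exp 1 - 1) := by
    simp only [c]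
    field_simp
    ring
  linarith [div_nonneg (sub_nonneg.2 hYe) hk.le]

theorem integral_le_of_threshold_bounds {R : ℝ → ℝ} {G S : ℝ} (hG : 0 < G) (hS : 0 ≤ S)
    (hbound : ∀ u ∈ Set.Icc (0 : ℝ) 1, R u ≤ G * log (1 + (exp 1 - 1) * u) + G + 1)
    (htail : ∀ u ∈ Set.Icc (0 : ℝ) 1, S ≤ G * log (1 + (exp 1 - 1) * u) → R u ≤ S) :
    ∫ u in (0 : ℝ)..1, R u ≤ exp 1 / (exp 1 - 1) * min S G + 1 := by
  by_cases hR : IntervalIntegrable R volume 0 1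
  · rcases le_total G S with hGS | hSG
    · rw [min_eq_right hGS]
      exact integral_le_of_log_bound hR hbound
    · rw [min_eq_left hSG]
      exact integral_le_of_log_bound_of_threshold_bound hG hS hSG hR hbound htail
  · rw [intervalIntegral.integral_undef hR]
    have := mul_nonneg (div_pos (exp_pos 1) exp_one_sub_one_pos).le (le_min hS hG.le)
    linarith

end LogarithmicThreshold

theorem smart_randomized_threshold_regret_general
    {A : Type*} (n : ℕ)
    (ℓ : ℕ → A → ℝ)
    (hℓ : ∀ t ∈ Finset.Icc 1 n, ∀ a : A, ℓ t a ∈ Set.Icc (0 : ℝ) 1)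
    (astar : ℕ → A)
    (hmin : ∀ t ∈ Finset.Icc 1 n, ∀ a : A,
      ∑ i ∈ Finset.Icc 1 t, ℓ i (astar t) ≤ ∑ i ∈ Finset.Icc 1 t, ℓ i a)
    (Sg : ℕ → ℝ)
    (hSg : ∀ t, Sg t = ∑ i ∈ Finset.Icc 1 t,
        ((∑ j ∈ Finset.Icc 1 i, ℓ j (astar (i - 1))) - ∑ j ∈ Finset.Icc 1 i, ℓ j (astar i)))
    (g : ℕ → ℝ) (hgmono : Monotone g) (hgn : 0 < g n)
    (b : List (A → ℝ) → A)
    (hb : ∀ s : ℕ, s ≤ n - 1 →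
      (∑ t ∈ Finset.Icc (s + 1) n,
          ℓ t (b ((List.range (t - 1 - s)).map (fun i => ℓ (s + 1 + i)))))
        - (⨅ a' : A, ∑ t ∈ Finset.Icc (s + 1) n, ℓ t a') ≤ g (n - s))
    (θ : ℝ → ℝ) (hθ : ∀ u, θ u = g n * Real.log (1 + (Real.exp 1 - 1) * u))
    (tsw : ℝ → ℕ)
    (htsw : ∀ u ∈ Set.Icc (0 : ℝ) 1,
      1 ≤ tsw u ∧ tsw u ≤ n ∧ (∀ t, 1 ≤ t → t < tsw u → Sg t ≤ θ u)
        ∧ (tsw u < n → θ u < Sg (tsw u)))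
    (a : ℝ → ℕ → A)
    (ha1 : ∀ u : ℝ, ∀ t ≤ tsw u, a u t = astar (t - 1))
    (ha2 : ∀ u : ℝ, ∀ t, tsw u < t →
      a u t = b ((List.range (t - 1 - tsw u)).map (fun i => ℓ (tsw u + 1 + i)))) :
    (∫ u in (0 : ℝ)..1,
        ((∑ t ∈ Finset.Icc 1 n, ℓ t (a u t)) - ∑ i ∈ Finset.Icc 1 n, ℓ i (astar n)))
      ≤ (Real.exp 1 / (Real.exp 1 - 1)) * min (Sg n) (g n) + 1 := by
  obtain rfl : Sg = ftlRegret ℓ astar := funext hSg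
  change ∫ u in (0 : ℝ)..1, regret ℓ astar n (a u) ≤ _
  refine integral_le_of_threshold_bounds hgn (ftlRegret_mono hmin (Nat.zero_le n) le_rfl)
    (fun u hu ↦ ?_) (fun u hu hSθ ↦ ?_)
  · obtain ⟨hs1, hsn, hbelow, -⟩ := htsw u hu
    have hθ0 : 0 ≤ θ u := by
      rw [hθ]
      exact mul_nonneg hgn.le <|
        log_nonneg (le_add_of_nonneg_right (mul_nonneg exp_one_sub_one_pos.le hu.1))
    have hftl := ftlRegret_le_add_one_of_forall_lt hℓ hmin (mem_Icc.2 ⟨hs1, hsn⟩) hθ0 hbelow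
    rw [← hθ]
    rcases hsn.lt_or_eq with hlt | rfl
    · have hreg := regret_le_ftlRegret_add (fun t ht a ↦ (hℓ t ht a).1) hmin hsn (ha1 u)
      rw [sum_congr rfl fun t ht ↦ by rw [ha2 u t (mem_Icc.1 ht).1]] at hreg
      linarith [hb (tsw u) (by omega), hgmono (Nat.sub_le n (tsw u))]
    · rw [regret_eq_ftlRegret (ha1 u)]
      linarith
  · obtain ⟨-, hsn, -, habove⟩ := htsw u hu
    have hno_switch : tsw u = n := by
      by_contra hne
      have := habove (hsn.lt_of_ne hne)
      linarith [ftlRegret_mono hmin hsn le_rfl, hθ u]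
    exact (regret_eq_ftlRegret (hno_switch ▸ ha1 u)).le

/-- **Regret of SMART with randomized threshold.** Losses in `[0,1]`, `g` monotone
nonnegative with `g n > 0`, and a backup algorithm `b` (a fixed map from finite tuples
of loss functions to actions) satisfying, for every `0 ≤ s ≤ n-1`, the worst-case
guarantee `g (n - s)` on rounds `s+1, …, n`.  For `u ∈ [0,1]` set
`θ u = g n · ln (1 + (e-1) u)`, let `tsw u` be the first `1 ≤ t ≤ n-1` with
`Sg t > θ u` (`tsw u = n` if none), and let the action sequence `a u` play FTL up to
round `tsw u` and then `b` on the remaining rounds (resetting losses).  Then the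
average regret `∫_0^1 Reg(a u) du` is at most `(e/(e-1)) · min (Sg n) (g n) + 1`. -/
theorem smart_randomized_threshold_regret
    {A : Type*} [Nonempty A] (n : ℕ) (hn : 1 ≤ n)
    (ℓ : ℕ → A → ℝ)
    (hℓ : ∀ t ∈ Finset.Icc 1 n, ∀ a : A, ℓ t a ∈ Set.Icc (0 : ℝ) 1)
    (astar : ℕ → A)
    (hmin : ∀ t ∈ Finset.Icc 1 n, ∀ a : A,
      ∑ i ∈ Finset.Icc 1 t, ℓ i (astar t) ≤ ∑ i ∈ Finset.Icc 1 t, ℓ i a)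
    (Sg : ℕ → ℝ)
    (hSg : ∀ t, Sg t = ∑ i ∈ Finset.Icc 1 t,
        ((∑ j ∈ Finset.Icc 1 i, ℓ j (astar (i - 1))) - ∑ j ∈ Finset.Icc 1 i, ℓ j (astar i)))
    (g : ℕ → ℝ) (hgmono : Monotone g) (hg0 : ∀ k, 0 ≤ g k) (hgn : 0 < g n)
    (b : List (A → ℝ) → A)
    (hb : ∀ s : ℕ, s ≤ n - 1 →
      (∑ t ∈ Finset.Icc (s + 1) n,
          ℓ t (b ((List.range (t - 1 - s)).map (fun i => ℓ (s + 1 + i)))))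
        - (⨅ a' : A, ∑ t ∈ Finset.Icc (s + 1) n, ℓ t a') ≤ g (n - s))
    (θ : ℝ → ℝ) (hθ : ∀ u, θ u = g n * Real.log (1 + (Real.exp 1 - 1) * u))
    (tsw : ℝ → ℕ)
    (htsw : ∀ u ∈ Set.Icc (0 : ℝ) 1,
      1 ≤ tsw u ∧ tsw u ≤ n ∧ (∀ t, 1 ≤ t → t < tsw u → Sg t ≤ θ u)
        ∧ (tsw u < n → θ u < Sg (tsw u)))
    (a : ℝ → ℕ → A)
    (ha1 : ∀ u : ℝ, ∀ t ≤ tsw u, a u t = astar (t - 1))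
    (ha2 : ∀ u : ℝ, ∀ t, tsw u < t →
      a u t = b ((List.range (t - 1 - tsw u)).map (fun i => ℓ (tsw u + 1 + i)))) :
    (∫ u in (0 : ℝ)..1,
        ((∑ t ∈ Finset.Icc 1 n, ℓ t (a u t)) - ∑ i ∈ Finset.Icc 1 n, ℓ i (astar n)))
      ≤ (Real.exp 1 / (Real.exp 1 - 1)) * min (Sg n) (g n) + 1 :=
  smart_randomized_threshold_regret_general n ℓ hℓ astar hmin Sg hSg g hgmono hgn b hb θ hθ tsw htsw
    a ha1 ha2
end

section
/- Constancy of the competitive-ratio functional: let g > 0 and define f(x) := e^{x/g} / (g(e−1)) for x ∈ [0, g]. Then for every z ∈ (0, g], (1/z)·∫_0^z (x + g)·f(x) dx + 1 − ∫_0^z f(x) dx = e/(e−1). -/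
/-! The density satisfies `f' = f / g`, so `x ↦ g x f(x)` is an antiderivative of `(x + g) f(x)`
and `g f` one of `f`. The two integrals are therefore `g z f(z)` and `g (f(z) - f(0))`; after
dividing the first by `z`, the terms `g f(z)` cancel and what remains is `1 + g f(0) = e/(e-1)`. -/

open Real intervalIntegral

theorem integral_exp_div {g : ℝ} (hg : g ≠ 0) (a b : ℝ) :
    ∫ x in a..b, exp (x / g) = g * (exp (b / g) - exp (a / g)) := by
  rw [integral_comp_div exp hg, integral_exp, smul_eq_mul]

theorem hasDerivAt_mul_mul_exp_div {g : ℝ} (hg : g ≠ 0) (x : ℝ) :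
    HasDerivAt (fun t => g * t * exp (t / g)) ((x + g) * exp (x / g)) x := by
  have hexp : HasDerivAt (fun t => exp (t / g)) (exp (x / g) / g) x := by
    simpa [div_eq_mul_inv, mul_comm] using ((hasDerivAt_id x).div_const g).exp
  refine (((hasDerivAt_id' x).const_mul g).mul hexp).congr_deriv ?_
  field_simp
  ring

theorem integral_add_mul_exp_div {g : ℝ} (hg : g ≠ 0) (a b : ℝ) :
    ∫ x in a..b, (x + g) * exp (x / g) = g * (b * exp (b / g) - a * exp (a / g)) := by
  rw [integral_eq_sub_of_hasDerivAt (fun x _ => hasDerivAt_mul_mul_exp_div hg x)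
    ((by fun_prop : Continuous fun x => (x + g) * exp (x / g)).intervalIntegrable _ _)]
  ring

/-- **Constancy of the competitive-ratio functional.** For `g > 0` and the density
`f x = e^{x/g} / (g (e-1))`, one has for every `z ∈ (0, g]`:
`(1/z) ∫_0^z (x+g) f x dx + 1 - ∫_0^z f x dx = e/(e-1)`. -/
theorem competitive_ratio_functional_constant
    (g : ℝ) (hg : 0 < g) (f : ℝ → ℝ)
    (hf : ∀ x : ℝ, f x = Real.exp (x / g) / (g * (Real.exp 1 - 1)))
    (z : ℝ) (hz : z ∈ Set.Ioc 0 g) :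
    (1 / z) * (∫ x in (0 : ℝ)..z, (x + g) * f x) + 1 - (∫ x in (0 : ℝ)..z, f x)
      = Real.exp 1 / (Real.exp 1 - 1) := by
  have he : 0 < exp 1 - 1 := sub_pos.mpr (one_lt_exp_iff.mpr one_pos)
  have hz0 : z ≠ 0 := hz.1.ne'
  simp only [hf, mul_div_assoc', integral_div, integral_add_mul_exp_div hg.ne',
    integral_exp_div hg.ne']
  field_simp
  simp only [zero_div, exp_zero]
  ring
end

section
/- Stability necessity (Cover): in the binary prediction setting, suppose φ : {0,1}^n → ℝ is achievable, i.e. there is a predictor (a_t) with a_t : {0,1}^{t−1} → [0,1] and ∑_{t=1}^n |a_t(y_1,…,y_{t−1}) − y_t| = φ(y) for every y ∈ {0,1}^n. For 0 ≤ t ≤ n define φ_t(y_1,…,y_t) := 2^{−(n−t)} ∑_{z∈{0,1}^{n−t}} φ(y_1,…,y_t,z_1,…,z_{n−t}). Then for every 1 ≤ t ≤ n and every (y_1,…,y_{t−1}) ∈ {0,1}^{t−1}, |φ_t(y_1,…,y_{t−1},0) − φ_t(y_1,…,y_{t−1},1)| ≤ 1. -/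
/-- `splice t m y z` agrees with `y` on coordinates `≤ t` and continues with the bits
`z : Fin m → Bool` on coordinates `t+1, …, t+m` (and `0` beyond). -/
def splice (t m : ℕ) (y : ℕ → ℕ) (z : Fin m → Bool) : ℕ → ℕ :=
  fun i => if i ≤ t then y i
    else if h : i - t - 1 < m then (if z ⟨i - t - 1, h⟩ then 1 else 0) else 0

/-- `condExp n φ t y` is `φ_t(y₁,…,y_t)`: the average of `φ` over the `2^{n-t}`
uniformly random completions of the prefix `(y₁, …, y_t)` to a length-`n` bit sequence. -/
noncomputable def condExp (n : ℕ) (φ : (ℕ → ℕ) → ℝ) (t : ℕ) (y : ℕ → ℕ) : ℝ :=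
  ((2 : ℝ) ^ (n - t))⁻¹ * ∑ z : Fin (n - t) → Bool, φ (splice t (n - t) y z)

/-- **Stability necessity (Cover).** If `φ : {0,1}^n → ℝ` is achievable, i.e. there is a
predictor `a` (values in `[0,1]`, depending only on the observed prefix) whose total loss
equals `φ y` on every bit sequence `y`, then for every `1 ≤ t ≤ n` and every `{0,1}`-valued
prefix `(y₁,…,y_{t-1})`: `|φ_t(y₁,…,y_{t-1},0) - φ_t(y₁,…,y_{t-1},1)| ≤ 1`. -/
theorem stability_necessity
    (n : ℕ) (hn : 1 ≤ n)
    (a : ℕ → (ℕ → ℕ) → ℝ)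
    (harange : ∀ t (y : ℕ → ℕ), a t y ∈ Set.Icc (0 : ℝ) 1)
    (hadep : ∀ t (y y' : ℕ → ℕ),
      (∀ i ∈ Finset.Icc 1 (t - 1), y i = y' i) → a t y = a t y')
    (φ : (ℕ → ℕ) → ℝ)
    (hφdep : ∀ y y' : ℕ → ℕ, (∀ i ∈ Finset.Icc 1 n, y i = y' i) → φ y = φ y')
    (hach : ∀ y : ℕ → ℕ, (∀ i ∈ Finset.Icc 1 n, y i ≤ 1) →
      ∑ t ∈ Finset.Icc 1 n, |a t y - (y t : ℝ)| = φ y)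
    (t : ℕ) (ht : t ∈ Finset.Icc 1 n)
    (y : ℕ → ℕ) (hy : ∀ i ∈ Finset.Icc 1 (t - 1), y i ≤ 1) :
    |condExp n φ t (Function.update y t 0) - condExp n φ t (Function.update y t 1)| ≤ 1 := by
  simp only [Finset.mem_Icc] at ht
  obtain ⟨ht1, htn⟩ := ht
  have hA0 : (0:ℝ) ≤ a t y := (harange t y).1
  have hA1 : a t y ≤ 1 := (harange t y).2
  have key : ∀ b : ℕ, b ≤ 1 →
      ∑ z : Fin (n - t) → Bool, φ (splice t (n - t) (Function.update y t b) z)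
        = 2 ^ (n - t) * ((∑ s ∈ Finset.Ico 1 t, |a s y - (y s : ℝ)|) + |a t y - (b : ℝ)|)
          + ((n - t : ℕ) : ℝ) * (2 ^ (n - t) / 2) := by
    intro b hb
    set W : (Fin (n - t) → Bool) → ℕ → ℕ :=
      fun z => splice t (n - t) (Function.update y t b) z with hW
    have hWle : ∀ z, ∀ i ∈ Finset.Icc 1 n, W z i ≤ 1 := by
      intro z i hi
      simp only [Finset.mem_Icc] at hi
      simp only [hW, splice]
      split_ifs with h1 h2
      · by_cases hit : i = t
        · subst hit; rw [Function.update_self]; exact hb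
        · rw [Function.update_of_ne hit]
          exact hy i (Finset.mem_Icc.mpr ⟨hi.1, by omega⟩)
      all_goals omega
    have hWprefix : ∀ z, ∀ i, i ≤ t - 1 → W z i = y i := by
      intro z i hi
      simp only [hW, splice]
      rw [if_pos (by omega), Function.update_of_ne (by omega)]
    have hWt : ∀ z, W z t = b := by
      intro z
      simp only [hW, splice]
      rw [if_pos le_rfl, Function.update_self]
    have hφW : ∀ z, φ (W z) = ∑ s ∈ Finset.Icc 1 n, |a s (W z) - (W z s : ℝ)| :=
      fun z => (hach (W z) (hWle z)).symm
    have hsplit : Finset.Icc 1 n = (Finset.Ico 1 t ∪ {t}) ∪ Finset.Ioc t n := by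
      ext i
      simp only [Finset.mem_Icc, Finset.mem_union, Finset.mem_Ico, Finset.mem_Ioc,
        Finset.mem_singleton]
      omega
    have hd1 : Disjoint (Finset.Ico 1 t) ({t} : Finset ℕ) := by
      simp only [Finset.disjoint_left, Finset.mem_Ico, Finset.mem_singleton]
      intro i hi
      omega
    have hd2 : Disjoint (Finset.Ico 1 t ∪ {t}) (Finset.Ioc t n) := by
      simp only [Finset.disjoint_left, Finset.mem_union, Finset.mem_Ico,
        Finset.mem_singleton, Finset.mem_Ioc]
      intro i hi
      omega
    have hCs : ∀ z, ∀ s ∈ Finset.Ico 1 t, |a s (W z) - (W z s : ℝ)| = |a s y - (y s : ℝ)| := by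
      intro z s hs
      simp only [Finset.mem_Ico] at hs
      have h1 : a s (W z) = a s y := by
        apply hadep
        intro i hi
        simp only [Finset.mem_Icc] at hi
        exact hWprefix z i (by omega)
      have h2 : W z s = y s := hWprefix z s (by omega)
      rw [h1, h2]
    have hTz : ∀ z, a t (W z) = a t y := by
      intro z
      apply hadep
      intro i hi
      simp only [Finset.mem_Icc] at hi
      exact hWprefix z i (by omega)
    have hE : ∀ s ∈ Finset.Ioc t n,
        ∑ z : Fin (n - t) → Bool, |a s (W z) - (W z s : ℝ)| = 2 ^ (n - t) / 2 := by
      intro s hs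
      simp only [Finset.mem_Ioc] at hs
      have hj : s - t - 1 < n - t := by omega
      set j : Fin (n - t) := ⟨s - t - 1, hj⟩ with hjdef
      have hWs : ∀ z, W z s = if z j then 1 else 0 := by
        intro z
        simp only [hW, splice]
        rw [if_neg (by omega), dif_pos hj]
      set σ : (Fin (n - t) → Bool) → (Fin (n - t) → Bool) :=
        fun z => Function.update z j (!z j) with hσ
      have hσinv : Function.Involutive σ := by
        intro z; funext i
        by_cases h : i = j
        · subst h; simp [hσ]
        · simp [hσ, Function.update_of_ne h]
      have hσj : ∀ z, σ z j = !z j := by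
        intro z; simp [hσ]
      have haσ : ∀ z, a s (W (σ z)) = a s (W z) := by
        intro z
        apply hadep
        intro i hi
        simp only [Finset.mem_Icc] at hi
        by_cases h1 : i ≤ t
        · simp only [hW, splice, if_pos h1]
        · have hi2 : i - t - 1 < n - t := by omega
          simp only [hW, splice]
          rw [if_neg h1, if_neg h1, dif_pos hi2, dif_pos hi2]
          have hne : (⟨i - t - 1, hi2⟩ : Fin (n - t)) ≠ j := by
            simp only [hjdef, ne_eq, Fin.mk.injEq]
            omega
          rw [show σ z ⟨i - t - 1, hi2⟩ = z ⟨i - t - 1, hi2⟩ from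
            Function.update_of_ne hne (!z j) z]
      have hpair : ∀ z, |a s (W z) - (W z s : ℝ)| + |a s (W (σ z)) - (W (σ z) s : ℝ)| = 1 := by
        intro z
        have h0 := (harange s (W z)).1
        have h1 := (harange s (W z)).2
        rw [haσ z, hWs z, hWs (σ z), hσj z]
        cases hzj : z j
        · simp only [hzj, Bool.not_false, if_true, if_false]
          push_cast
          rw [sub_zero, abs_of_nonneg h0, abs_of_nonpos (by linarith)]
          ring
        · simp only [hzj, Bool.not_true, if_true, if_false]
          push_cast
          rw [sub_zero, abs_of_nonneg h0, abs_of_nonpos (by linarith)]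
          ring
      have hreindex : ∑ z : Fin (n - t) → Bool, |a s (W (σ z)) - (W (σ z) s : ℝ)|
          = ∑ z : Fin (n - t) → Bool, |a s (W z) - (W z s : ℝ)| :=
        Fintype.sum_bijective σ hσinv.bijective _ _ (fun z => rfl)
      have hsum1 : ∑ _z : Fin (n - t) → Bool, (1:ℝ) = 2 ^ (n - t) := by
        simp [Finset.card_univ]
      have h2 : 2 * ∑ z : Fin (n - t) → Bool, |a s (W z) - (W z s : ℝ)| = 2 ^ (n - t) := by
        calc 2 * ∑ z : Fin (n - t) → Bool, |a s (W z) - (W z s : ℝ)|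
            = (∑ z : Fin (n - t) → Bool, |a s (W z) - (W z s : ℝ)|)
              + ∑ z : Fin (n - t) → Bool, |a s (W (σ z)) - (W (σ z) s : ℝ)| := by
              rw [hreindex]; ring
          _ = ∑ z : Fin (n - t) → Bool,
              (|a s (W z) - (W z s : ℝ)| + |a s (W (σ z)) - (W (σ z) s : ℝ)|) := by
              rw [Finset.sum_add_distrib]
          _ = ∑ _z : Fin (n - t) → Bool, (1:ℝ) :=
              Finset.sum_congr rfl fun z _ => hpair z
          _ = 2 ^ (n - t) := hsum1
      linarith
    calc ∑ z : Fin (n - t) → Bool, φ (W z)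
        = ∑ z : Fin (n - t) → Bool,
          (((∑ s ∈ Finset.Ico 1 t, |a s y - (y s : ℝ)|) + |a t y - (b : ℝ)|)
            + ∑ s ∈ Finset.Ioc t n, |a s (W z) - (W z s : ℝ)|) := by
          refine Finset.sum_congr rfl fun z _ => ?_
          rw [hφW z, hsplit, Finset.sum_union hd2, Finset.sum_union hd1, Finset.sum_singleton]
          congr 2
          · exact Finset.sum_congr rfl (hCs z)
          · rw [hTz z, hWt z]
      _ = (∑ _z : Fin (n - t) → Bool,
            ((∑ s ∈ Finset.Ico 1 t, |a s y - (y s : ℝ)|) + |a t y - (b : ℝ)|))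
          + ∑ z : Fin (n - t) → Bool, ∑ s ∈ Finset.Ioc t n, |a s (W z) - (W z s : ℝ)| := by
          rw [Finset.sum_add_distrib]
      _ = 2 ^ (n - t) * ((∑ s ∈ Finset.Ico 1 t, |a s y - (y s : ℝ)|) + |a t y - (b : ℝ)|)
          + ((n - t : ℕ) : ℝ) * (2 ^ (n - t) / 2) := by
          congr 1
          · rw [Finset.sum_const, Finset.card_univ]
            simp only [Fintype.card_fun, Fintype.card_fin, Fintype.card_bool, nsmul_eq_mul]
            push_cast
            ring
          · rw [Finset.sum_comm]
            rw [Finset.sum_congr rfl hE, Finset.sum_const, Nat.card_Ioc]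
            simp [nsmul_eq_mul]
  have h2pos : (0:ℝ) < 2 ^ (n - t) := by positivity
  simp only [condExp]
  rw [key 0 (by norm_num), key 1 (by norm_num)]
  have e1 : |a t y - ((0:ℕ) : ℝ)| = a t y := by
    push_cast; rw [sub_zero, abs_of_nonneg hA0]
  have e2 : |a t y - ((1:ℕ) : ℝ)| = 1 - a t y := by
    push_cast; rw [abs_of_nonpos (by linarith)]; ring
  rw [e1, e2]
  have hmain : ((2:ℝ) ^ (n - t))⁻¹ *
        (2 ^ (n - t) * ((∑ s ∈ Finset.Ico 1 t, |a s y - (y s : ℝ)|) + a t y)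
          + ((n - t : ℕ) : ℝ) * (2 ^ (n - t) / 2))
      - ((2:ℝ) ^ (n - t))⁻¹ *
        (2 ^ (n - t) * ((∑ s ∈ Finset.Ico 1 t, |a s y - (y s : ℝ)|) + (1 - a t y))
          + ((n - t : ℕ) : ℝ) * (2 ^ (n - t) / 2))
      = 2 * a t y - 1 := by
    field_simp
    ring
  rw [hmain, abs_le]
  constructor <;> linarith
end

section
/- Achievability sufficiency (Cover): in the binary prediction setting, let φ : {0,1}^n → ℝ satisfy the balance condition 2^{−n} ∑_{y∈{0,1}^n} φ(y) = n/2 and the stability condition |φ_t(y_1,…,y_{t−1},0) − φ_t(y_1,…,y_{t−1},1)| ≤ 1 for all 1 ≤ t ≤ n and all (y_1,…,y_{t−1}) ∈ {0,1}^{t−1}, where φ_t(y_1,…,y_t) := 2^{−(n−t)} ∑_{z∈{0,1}^{n−t}} φ(y_1,…,y_t,z). Then the predictor a_t(y_1,…,y_{t−1}) := (1 + φ_t(y_1,…,y_{t−1},0) − φ_t(y_1,…,y_{t−1},1))/2 takes values in [0,1] and achieves φ exactly: ∑_{t=1}^n |a_t(y_1,…,y_{t−1}) − y_t| = φ(y)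 for every y ∈ {0,1}^n. -/
lemma splice_cons (t m : ℕ) (y : ℕ → ℕ) (b : Bool) (z : Fin m → Bool) :
    splice t (m + 1) y (Fin.cons b z) =
      splice (t + 1) m (Function.update y (t + 1) (if b then 1 else 0)) z := by
  funext i
  simp only [splice]
  rcases lt_trichotomy i (t + 1) with hi | rfl | hi
  · rw [if_pos (by omega), if_pos (by omega), Function.update_of_ne (by omega)]
  · rw [if_neg (by omega), if_pos le_rfl, Function.update_self, dif_pos (by omega)]
    have hzero : (⟨t + 1 - t - 1, by omega⟩ : Fin (m + 1)) = 0 := by ext; simp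
    rw [hzero, Fin.cons_zero]
  · rw [if_neg (by omega), if_neg (by omega)]
    by_cases hm : i - (t + 1) - 1 < m
    · rw [dif_pos (by omega), dif_pos hm]
      have hsucc : (⟨i - t - 1, by omega⟩ : Fin (m + 1)) = Fin.succ ⟨i - (t + 1) - 1, hm⟩ := by
        ext; simp only [Fin.val_succ]; omega
      rw [hsucc, Fin.cons_succ]
    · rw [dif_neg (by omega), dif_neg hm]

lemma half_one_add_sub_mem_Icc {p q : ℝ} (h : |p - q| ≤ 1) :
    (1 + p - q) / 2 ∈ Set.Icc (0 : ℝ) 1 := by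
  rw [abs_le] at h
  constructor <;> linarith

section condExp

variable {n : ℕ} {φ : (ℕ → ℕ) → ℝ}

lemma condExp_eq_average_succ {t : ℕ} (ht : t < n) (y : ℕ → ℕ) :
    condExp n φ t y =
      (condExp n φ (t + 1) (Function.update y (t + 1) 0) +
        condExp n φ (t + 1) (Function.update y (t + 1) 1)) / 2 := by
  obtain ⟨m, hm⟩ : ∃ m, n - t = m + 1 := ⟨n - (t + 1), by omega⟩
  have hm' : n - (t + 1) = m := by omega
  simp only [condExp]
  rw [hm, hm']
  rw [← (Fin.consEquiv fun _ : Fin (m + 1) => Bool).sum_comp, Fintype.sum_prod_type,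
    Fintype.sum_bool]
  have hcons (b : Bool) (z : Fin m → Bool) :
      Fin.consEquiv (fun _ : Fin (m + 1) => Bool) (b, z) = Fin.cons b z := rfl
  simp only [hcons, splice_cons, if_true, if_false, Bool.false_eq_true]
  rw [pow_succ]
  ring

/-- Stability makes the sign of `a_{t+1} - y_{t+1}` known in advance, which is why the absolute
loss is an affine function of `φ_{t+1}(y)`. -/
lemma abs_predictor_sub_eq_condExp_sub {t : ℕ} (ht : t < n) {y : ℕ → ℕ} (hy : y (t + 1) ≤ 1)
    (hstab : |condExp n φ (t + 1) (Function.update y (t + 1) 0) -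
      condExp n φ (t + 1) (Function.update y (t + 1) 1)| ≤ 1) :
    |(1 + condExp n φ (t + 1) (Function.update y (t + 1) 0) -
        condExp n φ (t + 1) (Function.update y (t + 1) 1)) / 2 - (y (t + 1) : ℝ)| =
      condExp n φ (t + 1) y - condExp n φ t y + 1 / 2 := by
  have hupdate : Function.update y (t + 1) (y (t + 1)) = y := Function.update_eq_self _ _
  rw [condExp_eq_average_succ ht]
  rw [abs_le] at hstab
  obtain hbit | hbit : y (t + 1) = 0 ∨ y (t + 1) = 1 := by omega
  · rw [hbit] at hupdate
    rw [hbit, Nat.cast_zero, sub_zero, abs_of_nonneg (by linarith), hupdate]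
    ring
  · rw [hbit] at hupdate
    rw [hbit, Nat.cast_one, abs_of_nonpos (by linarith), hupdate]
    ring

variable (hφ : ∀ y y' : ℕ → ℕ, (∀ i ∈ Finset.Icc 1 n, y i = y' i) → φ y = φ y')
include hφ

lemma condExp_self (y : ℕ → ℕ) : condExp n φ n y = φ y := by
  rw [condExp, Nat.sub_self, pow_zero, inv_one, one_mul, Fintype.sum_unique]
  refine hφ _ _ fun i hi => ?_
  simp [splice, (Finset.mem_Icc.mp hi).2]

lemma condExp_zero (y : ℕ → ℕ) :
    condExp n φ 0 y = ((2 : ℝ) ^ n)⁻¹ * ∑ z : Fin n → Bool, φ (splice 0 n (fun _ => 0) z) := by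
  simp only [condExp, Nat.sub_zero]
  congr 1
  refine Finset.sum_congr rfl fun z _ => hφ _ _ fun i hi => ?_
  simp [splice, show i ≠ 0 by rw [Finset.mem_Icc] at hi; omega]

end condExp

theorem achievability_sufficiency_general
    (n : ℕ)
    (φ : (ℕ → ℕ) → ℝ)
    (hφdep : ∀ y y' : ℕ → ℕ, (∀ i ∈ Finset.Icc 1 n, y i = y' i) → φ y = φ y')
    (hbal : ((2 : ℝ) ^ n)⁻¹ * (∑ z : Fin n → Bool,
        φ (splice 0 n (fun _ => 0) z)) = (n : ℝ) / 2)
    (hstab : ∀ t ∈ Finset.Icc 1 n, ∀ y : ℕ → ℕ,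
      (∀ i ∈ Finset.Icc 1 (t - 1), y i ≤ 1) →
      |condExp n φ t (Function.update y t 0) - condExp n φ t (Function.update y t 1)| ≤ 1)
    (a : ℕ → (ℕ → ℕ) → ℝ)
    (ha : ∀ t (y : ℕ → ℕ), a t y =
      (1 + condExp n φ t (Function.update y t 0)
         - condExp n φ t (Function.update y t 1)) / 2) :
    (∀ t ∈ Finset.Icc 1 n, ∀ y : ℕ → ℕ,
        (∀ i ∈ Finset.Icc 1 (t - 1), y i ≤ 1) → a t y ∈ Set.Icc (0 : ℝ) 1)
    ∧ ∀ y : ℕ → ℕ, (∀ i ∈ Finset.Icc 1 n, y i ≤ 1) →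
        ∑ t ∈ Finset.Icc 1 n, |a t y - (y t : ℝ)| = φ y := by
  refine ⟨fun t ht y hy => ha t y ▸ half_one_add_sub_mem_Icc (hstab t ht y hy), fun y hy => ?_⟩
  have hstep : ∀ t ∈ Finset.range n, |a (1 + t) y - (y (1 + t) : ℝ)| =
      condExp n φ (t + 1) y - condExp n φ t y + 1 / 2 := by
    intro t ht
    rw [Finset.mem_range] at ht
    rw [add_comm 1 t, ha]
    exact abs_predictor_sub_eq_condExp_sub ht (hy _ (Finset.mem_Icc.mpr (by omega)))
      (hstab _ (Finset.mem_Icc.mpr (by omega)) y fun i hi =>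
        hy i (Finset.mem_Icc.mpr (by rw [Finset.mem_Icc] at hi; omega)))
  calc ∑ t ∈ Finset.Icc 1 n, |a t y - (y t : ℝ)|
      = ∑ t ∈ Finset.range n, (condExp n φ (t + 1) y - condExp n φ t y + 1 / 2) := by
        rw [← Finset.Ico_add_one_right_eq_Icc, Finset.sum_Ico_eq_sum_range, Nat.add_sub_cancel,
          Finset.sum_congr rfl hstep]
    _ = condExp n φ n y - condExp n φ 0 y + n / 2 := by
        rw [Finset.sum_add_distrib, Finset.sum_range_sub (condExp n φ · y), Finset.sum_const,
          Finset.card_range, nsmul_eq_mul]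
        ring
    _ = φ y := by
        rw [condExp_self hφdep, condExp_zero hφdep, hbal]
        ring

/-- **Achievability sufficiency (Cover).** If `φ : {0,1}^n → ℝ` satisfies the balance
condition `2^{-n} ∑_y φ y = n/2` and the stability condition
`|φ_t(·,0) - φ_t(·,1)| ≤ 1`, then the predictor
`a t y = (1 + φ_t(y₁,…,y_{t-1},0) - φ_t(y₁,…,y_{t-1},1))/2` takes values in `[0,1]`
and its total loss equals `φ y` on every `{0,1}`-valued sequence `y`. -/
theorem achievability_sufficiency
    (n : ℕ) (hn : 1 ≤ n)
    (φ : (ℕ → ℕ) → ℝ)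
    (hφdep : ∀ y y' : ℕ → ℕ, (∀ i ∈ Finset.Icc 1 n, y i = y' i) → φ y = φ y')
    (hbal : ((2 : ℝ) ^ n)⁻¹ * (∑ z : Fin n → Bool,
        φ (splice 0 n (fun _ => 0) z)) = (n : ℝ) / 2)
    (hstab : ∀ t ∈ Finset.Icc 1 n, ∀ y : ℕ → ℕ,
      (∀ i ∈ Finset.Icc 1 (t - 1), y i ≤ 1) →
      |condExp n φ t (Function.update y t 0) - condExp n φ t (Function.update y t 1)| ≤ 1)
    (a : ℕ → (ℕ → ℕ) → ℝ)
    (ha : ∀ t (y : ℕ → ℕ), a t y =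
      (1 + condExp n φ t (Function.update y t 0)
         - condExp n φ t (Function.update y t 1)) / 2) :
    (∀ t ∈ Finset.Icc 1 n, ∀ y : ℕ → ℕ,
        (∀ i ∈ Finset.Icc 1 (t - 1), y i ≤ 1) → a t y ∈ Set.Icc (0 : ℝ) 1)
    ∧ ∀ y : ℕ → ℕ, (∀ i ∈ Finset.Icc 1 n, y i ≤ 1) →
        ∑ t ∈ Finset.Icc 1 n, |a t y - (y t : ℝ)| = φ y :=
  achievability_sufficiency_general n φ hφdep hbal hstab a ha
end

section
/- Exact law of the number of equalizations (Feller): let n ≥ 2 be an even integer and 0 ≤ k ≤ n/2 an integer. Then the number of sequences y ∈ {0,1}^n whose lead-change count satisfies c(y_1,…,y_n) = k + 1 equals 2^k · binom(n−k, n/2). Equivalently, for uniformly random bits, p_{n,k} := P[c(ε_1,…,ε_n) = k+1] = 2^{−(n−k)} · binom(n−k, n/2). -/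
/-!
Read `y` as a ±1 walk. Splitting off the last step gives a linear recursion for the number
`walkCount t c s` of walks with lead-change count `c` ending at height `s`; its solution is
`2 ^ k * firstPassage (t - k) (|s| + k)` for `c = k + 1`, where `firstPassage L b` is the number of
paths of length `L` from `b` that first reach `0` at time `L` (each of the `k` returns contributes
the factor 2 of a sign choice and trades one step for one unit of height). Row sums of
`firstPassage` are binomial coefficients by Pascal's rule, and summing over the final height
gives `2 ^ k * (n - k).choose (n / 2)`.
-/

/-- `extSeq n y` is the `{0,1}`-valued sequence on `ℕ` (indexed `1, …, n`)
corresponding to the bit vector `y : Fin n → Bool` (and `0` outside `[1, n]`). -/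
def extSeq (n : ℕ) (y : Fin n → Bool) : ℕ → ℕ :=
  fun i => if h : 1 ≤ i ∧ i ≤ n then (if y ⟨i - 1, by omega⟩ then 1 else 0) else 0

/-- `leadCount t Y` is the lead-change count of the prefix `(Y 1, …, Y t)`:
the number of `0 ≤ j ≤ t` with `∑_{i=1}^j Y i = ∑_{i=1}^j (1 - Y i)`,
i.e. `2 ∑_{i=1}^j Y i = j` (note `j = 0` always counts). -/
def leadCount (t : ℕ) (Y : ℕ → ℕ) : ℕ :=
  ((Finset.range (t + 1)).filter (fun j => 2 * ∑ i ∈ Finset.Icc 1 j, Y i = j)).card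

open Finset

lemma leadCount_pos (t : ℕ) (Y : ℕ → ℕ) : 0 < leadCount t Y :=
  card_pos.2 ⟨0, by simp⟩

lemma leadCount_congr {t : ℕ} {Y Y' : ℕ → ℕ} (h : ∀ i ≤ t, Y i = Y' i) :
    leadCount t Y = leadCount t Y' := by
  refine congrArg card (filter_congr fun j hj => ?_)
  rw [sum_congr rfl fun i hi => h i (by simp at hi hj; omega)]

lemma leadCount_succ (t : ℕ) (Y : ℕ → ℕ) :
    leadCount (t + 1) Y =
      leadCount t Y + if 2 * ∑ i ∈ Icc 1 (t + 1), Y i = t + 1 then 1 else 0 := by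
  rw [leadCount, range_add_one, filter_insert]
  split_ifs
  · rw [card_insert_of_notMem (by simp)]; rfl
  · rfl

lemma extSeq_snoc_of_le {t : ℕ} (y : Fin t → Bool) (b : Bool) {i : ℕ} (hi : i ≤ t) :
    extSeq (t + 1) (Fin.snoc y b) i = extSeq t y i := by
  unfold extSeq
  by_cases h : 1 ≤ i
  · rw [dif_pos ⟨h, by omega⟩, dif_pos ⟨h, hi⟩]
    simp [Fin.snoc, show i - 1 < t by omega]
  · rw [dif_neg (by omega), dif_neg (by omega)]

lemma extSeq_snoc_last {t : ℕ} (y : Fin t → Bool) (b : Bool) :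
    extSeq (t + 1) (Fin.snoc y b) (t + 1) = if b then 1 else 0 := by
  simp [extSeq, Fin.snoc]

lemma extSeq_le_one (t : ℕ) (y : Fin t → Bool) (i : ℕ) : extSeq t y i ≤ 1 := by
  unfold extSeq; split_ifs <;> omega

def walkHeight {t : ℕ} (y : Fin t → Bool) : ℤ :=
  2 * (∑ i ∈ Icc 1 t, extSeq t y i : ℕ) - t

lemma walkHeight_mem_Icc {t : ℕ} (y : Fin t → Bool) : walkHeight y ∈ Icc (-(t : ℤ)) t := by
  have : ∑ i ∈ Icc 1 t, extSeq t y i ≤ t := by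
    simpa using sum_le_card_nsmul (Icc 1 t) _ 1 fun i _ => extSeq_le_one t y i
  rw [mem_Icc, walkHeight]; omega

lemma walkHeight_snoc {t : ℕ} (y : Fin t → Bool) (b : Bool) :
    walkHeight (Fin.snoc y b) = walkHeight y + if b then 1 else -1 := by
  rw [walkHeight, walkHeight, sum_Icc_succ_top (by omega), extSeq_snoc_last,
    sum_congr rfl fun i hi => extSeq_snoc_of_le y b (mem_Icc.1 hi).2]
  cases b <;> simp <;> ring

lemma leadCount_extSeq_snoc {t : ℕ} (y : Fin t → Bool) (b : Bool) :
    leadCount (t + 1) (extSeq (t + 1) (Fin.snoc y b)) =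
      leadCount t (extSeq t y) + if walkHeight (Fin.snoc y b) = 0 then 1 else 0 := by
  rw [leadCount_succ, leadCount_congr fun i hi => extSeq_snoc_of_le y b hi]
  congr 2
  rw [walkHeight]
  apply propext
  omega

lemma card_filter_snoc {α : Type*} [Fintype α] {t : ℕ} (p : (Fin (t + 1) → α) → Prop)
    [DecidablePred p] : #{y | p y} = ∑ a, #{y : Fin t → α | p (Fin.snoc y a)} := by
  simp_rw [card_filter]
  rw [← (Fin.snocEquiv fun _ => α).sum_comp, Fintype.sum_prod_type]
  rfl

def walkCount (t c : ℕ) (s : ℤ) : ℕ :=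
  #{y : Fin t → Bool | leadCount t (extSeq t y) = c ∧ walkHeight y = s}

lemma walkCount_leadCount_zero (t : ℕ) (s : ℤ) : walkCount t 0 s = 0 :=
  card_eq_zero.2 <| filter_eq_empty_iff.2 fun _ _ h => (leadCount_pos t _).ne' h.1

lemma walkCount_zero (c : ℕ) (s : ℤ) : walkCount 0 c s = if c = 1 ∧ s = 0 then 1 else 0 := by
  have h : ∀ Y, leadCount 0 Y = 1 := fun Y => rfl
  rw [walkCount, card_filter]
  simp [h, walkHeight, eq_comm]

lemma walkCount_succ (t c : ℕ) (s : ℤ) :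
    walkCount (t + 1) (c + if s = 0 then 1 else 0) s =
      walkCount t c (s - 1) + walkCount t c (s + 1) := by
  rw [walkCount, card_filter_snoc, Fintype.sum_bool]
  congr 1 <;> refine congrArg card (filter_congr fun _ _ => ?_) <;>
    rw [leadCount_extSeq_snoc, walkHeight_snoc] <;>
    simp only [↓reduceIte, Bool.false_eq_true] <;> split_ifs <;> omega

def firstPassage : ℕ → ℕ → ℕ
  | 0, b => if b = 0 then 1 else 0
  | _ + 1, 0 => 0
  | L + 1, b + 1 => firstPassage L b + firstPassage L (b + 2)

lemma firstPassage_succ_succ (L b : ℕ) :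
    firstPassage (L + 1) (b + 1) = firstPassage L b + firstPassage L (b + 2) := rfl

lemma firstPassage_one (b : ℕ) : firstPassage 1 b = if b = 1 then 1 else 0 := by
  rcases b with _ | b <;> simp [firstPassage]

lemma firstPassage_succ_sub (t k a : ℕ) :
    firstPassage (t + 1 - k) (a + 1 + k) =
      firstPassage (t - k) (a + k) + firstPassage (t - k) (a + 2 + k) := by
  rcases le_or_gt k t with hk | hk
  · rw [show t + 1 - k = t - k + 1 by omega, show a + 1 + k = a + k + 1 by omega, firstPassage,
      show a + k + 2 = a + 2 + k by omega]
  · rw [show t + 1 - k = 0 by omega, show t - k = 0 by omega]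
    simp only [firstPassage]
    split_ifs <;> omega

theorem walkCount_eq (t k : ℕ) (s : ℤ) :
    walkCount t (k + 1) s = 2 ^ k * firstPassage (t - k) (s.natAbs + k) := by
  induction t generalizing k s with
  | zero =>
    rw [walkCount_zero]
    simp only [firstPassage, Nat.zero_sub]
    split_ifs <;> simp_all
  | succ t ih =>
    rcases eq_or_ne s 0 with rfl | hs
    · cases k with
      | zero =>
        have h := walkCount_succ t 0 0
        simp only [if_true, walkCount_leadCount_zero] at h
        simp [h, firstPassage]
      | succ k =>
        have h := walkCount_succ t (k + 1) 0
        simp only [if_true] at h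
        rw [h, ih, ih, pow_succ, show t + 1 - (k + 1) = t - k by omega]
        simp only [Int.natAbs_zero, Int.natAbs_neg, Int.natAbs_one, zero_add, zero_sub,
          add_comm 1 k]
        ring
    · have h := walkCount_succ t (k + 1) s
      rw [if_neg hs, add_zero] at h
      rw [h, ih, ih, ← mul_add]
      obtain ⟨a, ha⟩ : ∃ a, s.natAbs = a + 1 := ⟨s.natAbs - 1, by omega⟩
      rw [ha, firstPassage_succ_sub]
      rcases hs.lt_or_gt with hneg | hpos
      · rw [show (s - 1).natAbs = a + 2 by omega, show (s + 1).natAbs = a by omega, add_comm]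
      · rw [show (s - 1).natAbs = a by omega, show (s + 1).natAbs = a + 2 by omega]

lemma sum_range_firstPassage_zero (L R : ℕ) :
    ∑ i ∈ range (R + 1), firstPassage (L + 1) i =
      ∑ i ∈ range R, firstPassage (L + 1) (1 + i) := by
  simp [sum_range_succ', firstPassage, add_comm]

theorem sum_range_firstPassage (M b R : ℕ) (h : M + 1 < b + R) :
    ∑ i ∈ range R, firstPassage (M + 1) (b + i) = M.choose ((M + b) / 2) := by
  induction M generalizing b R with
  | zero =>
    simp only [zero_add, firstPassage_one]
    rcases b with _ | _ | b
    · simp [sum_ite_eq']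
      omega
    · simp [sum_ite_eq', show 0 < R by omega]
    · simp [Nat.choose_eq_zero_of_lt, show ∀ x, b + 1 + 1 + x ≠ 1 by omega]
  | succ M ih =>
    have hsucc : ∀ c R, M + 2 < c + 1 + R →
        ∑ i ∈ range R, firstPassage (M + 2) (c + 1 + i) = (M + 1).choose ((M + c + 2) / 2) := by
      intro c R hR
      simp only [show ∀ i, c + 1 + i = c + i + 1 by omega, firstPassage_succ_succ,
        sum_add_distrib, show ∀ i, c + i + 2 = c + 2 + i by omega]
      rw [ih c R (by omega), ih (c + 2) R (by omega),
        show (M + (c + 2)) / 2 = (M + c) / 2 + 1 by omega,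
        show (M + c + 2) / 2 = (M + c) / 2 + 1 by omega, Nat.choose_succ_succ']
    rcases b with _ | c
    · obtain ⟨R, rfl⟩ : ∃ R', R = R' + 1 := ⟨R - 1, by omega⟩
      have hone := hsucc 0 R (by omega)
      simp only [zero_add, add_zero] at hone ⊢
      rw [sum_range_firstPassage_zero, hone]
      exact Nat.choose_symm_of_eq_add (by omega)
    · rw [hsucc c R (by omega)]
      congr 1
      omega

lemma sum_Icc_neg_natAbs {M : Type*} [AddCommMonoid M] (f : ℕ → M) (t : ℕ) :
    ∑ s ∈ Icc (-(t : ℤ)) t, f s.natAbs = f 0 + 2 • ∑ i ∈ range t, f (i + 1) := by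
  induction t with
  | zero => simp
  | succ t ih =>
    have hIcc : Icc (-((t + 1 : ℕ) : ℤ)) (t + 1 : ℕ) =
        insert (-(t + 1 : ℤ)) (insert (t + 1 : ℤ) (Icc (-(t : ℤ)) t)) := by
      ext x; simp only [mem_Icc, mem_insert]; omega
    rw [hIcc, sum_insert (by simp; omega), sum_insert (by simp), ih, sum_range_succ, smul_add,
      two_nsmul (f (t + 1))]
    simp only [Int.natAbs_neg]
    rw [show (t + 1 : ℤ).natAbs = t + 1 by omega]
    abel

theorem card_leadCount_eq (t k : ℕ) (hk : k < t) :
    #{y : Fin t → Bool | leadCount t (extSeq t y) = k + 1} =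
      2 ^ k * ((t - k - 1).choose ((t - 1) / 2) + (t - k - 1).choose (t / 2)) := by
  obtain ⟨M, hM⟩ : ∃ M, t - k = M + 1 := ⟨t - k - 1, by omega⟩
  rw [card_eq_sum_card_fiberwise fun y _ => walkHeight_mem_Icc y]
  simp_rw [filter_filter]
  change ∑ s ∈ Icc _ _, walkCount t (k + 1) s = _
  simp_rw [walkCount_eq, ← mul_sum, hM, sum_Icc_neg_natAbs fun a => firstPassage (M + 1) (a + k)]
  have hrow := sum_range_firstPassage M k (t + 1) (by omega)
  have hrow' := sum_range_firstPassage M (k + 1) t (by omega)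
  rw [sum_range_succ', add_zero] at hrow
  simp only [show ∀ i, k + (i + 1) = i + 1 + k by omega] at hrow
  simp only [show ∀ i, k + 1 + i = i + 1 + k by omega] at hrow'
  rw [zero_add, two_nsmul, ← add_assoc, add_comm (firstPassage _ k), hrow, hrow',
    Nat.add_sub_cancel,     show M + k = t - 1 by omega, show M + (k + 1) = t by omega]

/-- **Exact law of the number of equalizations (Feller).** For even `n ≥ 2` and
`0 ≤ k ≤ n/2`, the number of bit sequences `y ∈ {0,1}^n` with lead-change count
`c(y₁,…,y_n) = k + 1` equals `2^k · binom (n-k) (n/2)`. -/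
theorem feller_equalization_count
    (n : ℕ) (hn : 2 ≤ n) (hev : Even n) (k : ℕ) (hk : k ≤ n / 2) :
    (Finset.univ.filter (fun y : Fin n → Bool =>
        leadCount n (extSeq n y) = k + 1)).card
      = 2 ^ k * Nat.choose (n - k) (n / 2) := by
  obtain ⟨m, rfl⟩ := hev
  obtain ⟨N, hN⟩ : ∃ N, m + m - k = N + 1 := ⟨m + m - k - 1, by omega⟩
  obtain ⟨j, rfl⟩ : ∃ j, m = j + 1 := ⟨m - 1, by omega⟩
  rw [card_leadCount_eq _ _ (by omega), hN, show (j + 1 + (j + 1)) / 2 = j + 1 by omega,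
    show (j + 1 + (j + 1) - 1) / 2 = j by omega, Nat.add_sub_cancel, Nat.choose_succ_succ']
end

section
/- Taylor estimate for the Stirling ratio: let C > 0 be real, n ≥ 16C² an even integer, and k an integer with 1 ≤ k ≤ C√n. Set T := (1 − k/n)^{n−k} / (1 − 2k/n)^{n/2 − k}. Then −k²/(2n) − 15k³/n² ≤ ln T ≤ −k²/(2n) + 15k³/n². -/
/-! With `x = k/n ≤ 1/4` one has `ln T = n·((1 - x) ln(1 - x) - (1/2 - x) ln(1 - 2x))`.
Inserting `ln(1 - y) = -y - y²/2 + O(y³)` for `y = x` and `y = 2x`, the linear terms cancel and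
the quadratic ones leave `-x²/2`, so `ln T = -n x²/2 + O(n x³) = -k²/(2n) + O(k³/n²)`. -/

open Real

lemma abs_log_one_sub_add_le {y : ℝ} (hy : |y| ≤ 1 / 2) :
    |log (1 - y) + y + y ^ 2 / 2| ≤ 2 * |y| ^ 3 := by
  have h := abs_log_sub_add_sum_range_le (hy.trans_lt (by norm_num)) 2
  calc |log (1 - y) + y + y ^ 2 / 2| ≤ |y| ^ 3 / (1 - |y|) := by
        convert h using 2
        simp only [Finset.sum_range_succ, Finset.sum_range_zero]
        ring
    _ ≤ 2 * |y| ^ 3 := by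
      rw [div_le_iff₀ (by linarith)]
      nlinarith [pow_nonneg (abs_nonneg y) 3]

lemma abs_one_sub_mul_log_sub_half_sub_mul_log_add_sq_le {x : ℝ} (hx0 : 0 ≤ x)
    (hx : x ≤ 1 / 4) :
    |(1 - x) * log (1 - x) - (1 / 2 - x) * log (1 - 2 * x) + x ^ 2 / 2| ≤ 12 * x ^ 3 := by
  set a := log (1 - x) + x + x ^ 2 / 2
  set b := log (1 - 2 * x) + 2 * x + (2 * x) ^ 2 / 2
  have ha : |a| ≤ 2 * x ^ 3 := by
    simpa only [abs_of_nonneg hx0] using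
      abs_log_one_sub_add_le (y := x) (by rw [abs_of_nonneg hx0]; linarith)
  have hb : |b| ≤ 16 * x ^ 3 := by
    have h2x : |2 * x| = 2 * x := abs_of_nonneg (by linarith)
    have := abs_log_one_sub_add_le (y := 2 * x) (by rw [h2x]; linarith)
    rw [h2x] at this
    linarith
  have hexpand : (1 - x) * log (1 - x) - (1 / 2 - x) * log (1 - 2 * x) + x ^ 2 / 2
      = (1 - x) * a - (1 / 2 - x) * b - 3 / 2 * x ^ 3 := by
    simp only [a, b]; ring
  have hx3 : 0 ≤ 3 / 2 * x ^ 3 := by positivity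
  rw [hexpand]
  calc |(1 - x) * a - (1 / 2 - x) * b - 3 / 2 * x ^ 3|
      ≤ |(1 - x) * a| + |(1 / 2 - x) * b| + |3 / 2 * x ^ 3| :=
        (abs_sub _ _).trans (add_le_add_left (abs_sub _ _) _)
    _ = (1 - x) * |a| + (1 / 2 - x) * |b| + 3 / 2 * x ^ 3 := by
        rw [abs_mul, abs_mul, abs_of_nonneg (by linarith : 0 ≤ 1 - x),
          abs_of_nonneg (by linarith : 0 ≤ 1 / 2 - x), abs_of_nonneg hx3]
    _ ≤ 12 * x ^ 3 := by nlinarith [abs_nonneg a, abs_nonneg b]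

lemma four_mul_le_of_le_mul_sqrt {C k n : ℝ} (hk : 0 ≤ k) (hn : 16 * C ^ 2 ≤ n)
    (hkC : k ≤ C * √n) : 4 * k ≤ n := by
  have hn0 : 0 ≤ n := le_trans (by positivity) hn
  have hsq : k ^ 2 ≤ C ^ 2 * n :=
    calc k ^ 2 ≤ (C * √n) ^ 2 := pow_le_pow_left₀ hk hkC 2
      _ = C ^ 2 * n := by rw [mul_pow, sq_sqrt hn0]
  nlinarith

lemma log_stirling_ratio_eq {n k : ℕ} (hn : Even n) (hk : 2 * k < n) :
    log ((1 - (k : ℝ) / n) ^ (n - k) / (1 - 2 * (k : ℝ) / n) ^ (n / 2 - k))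
      = n * ((1 - (k : ℝ) / n) * log (1 - (k : ℝ) / n)
          - (1 / 2 - (k : ℝ) / n) * log (1 - 2 * ((k : ℝ) / n))) := by
  have hn0 : (0 : ℝ) < n := by exact_mod_cast (by omega : 0 < n)
  have hk' : 2 * (k : ℝ) < n := by exact_mod_cast hk
  have h1 : 0 < 1 - (k : ℝ) / n := by rw [sub_pos, div_lt_one hn0]; linarith
  have h2 : 0 < 1 - 2 * (k : ℝ) / n := by rw [sub_pos, div_lt_one hn0]; linarith
  have hhalf : ((n / 2 : ℕ) : ℝ) = n / 2 := by
    rw [Nat.cast_div_charZero (even_iff_two_dvd.mp hn)]; norm_num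
  rw [log_div (pow_pos h1 _).ne' (pow_pos h2 _).ne', log_pow, log_pow,
    Nat.cast_sub (by omega), Nat.cast_sub (by omega), hhalf, mul_div_assoc]
  field_simp

theorem stirling_ratio_taylor_general
    (C : ℝ) (n : ℕ) (hev : Even n) (hn : 16 * C ^ 2 ≤ (n : ℝ))
    (k : ℕ) (hk1 : 1 ≤ k) (hk2 : (k : ℝ) ≤ C * Real.sqrt n) :
    -((k : ℝ) ^ 2 / (2 * n)) - 15 * (k : ℝ) ^ 3 / (n : ℝ) ^ 2
        ≤ Real.log ((1 - (k : ℝ) / n) ^ (n - k) / (1 - 2 * (k : ℝ) / n) ^ (n / 2 - k))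
    ∧ Real.log ((1 - (k : ℝ) / n) ^ (n - k) / (1 - 2 * (k : ℝ) / n) ^ (n / 2 - k))
        ≤ -((k : ℝ) ^ 2 / (2 * n)) + 15 * (k : ℝ) ^ 3 / (n : ℝ) ^ 2 := by
  have h4k : 4 * (k : ℝ) ≤ n := four_mul_le_of_le_mul_sqrt k.cast_nonneg hn hk2
  have hn0 : (0 : ℝ) < n := by
    have : (1 : ℝ) ≤ k := by exact_mod_cast hk1
    linarith
  have hx0 : 0 ≤ (k : ℝ) / n := by positivity
  have hx : (k : ℝ) / n ≤ 1 / 4 := by rw [div_le_iff₀ hn0]; linarith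
  have hquad : (k : ℝ) ^ 2 / (2 * n) = n * (((k : ℝ) / n) ^ 2 / 2) := by field_simp
  have hcube : 15 * (k : ℝ) ^ 3 / (n : ℝ) ^ 2 = 15 * (n * ((k : ℝ) / n) ^ 3) := by
    field_simp
  rw [hquad, hcube,
    log_stirling_ratio_eq hev (by exact_mod_cast (by linarith : 2 * (k : ℝ) < n))]
  generalize (k : ℝ) / n = x at hx0 hx ⊢
  have hbound : |n * ((1 - x) * log (1 - x) - (1 / 2 - x) * log (1 - 2 * x)) + n * (x ^ 2 / 2)|
      ≤ n * (12 * x ^ 3) := by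
    rw [← mul_add, abs_mul, abs_of_pos hn0]
    gcongr
    exact abs_one_sub_mul_log_sub_half_sub_mul_log_add_sq_le hx0 hx
  have hslack : n * (12 * x ^ 3) ≤ 15 * (n * x ^ 3) := by nlinarith [pow_nonneg hx0 3]
  constructor <;> linarith [abs_le.mp hbound]

/-- **Taylor estimate for the Stirling ratio.** For real `C > 0`, an even integer
`n ≥ 16C²`, and an integer `1 ≤ k ≤ C√n`, the quantity
`T = (1 - k/n)^{n-k} / (1 - 2k/n)^{n/2 - k}` satisfies
`-k²/(2n) - 15k³/n² ≤ ln T ≤ -k²/(2n) + 15k³/n²`. -/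
theorem stirling_ratio_taylor
    (C : ℝ) (hC : 0 < C) (n : ℕ) (hev : Even n) (hn : 16 * C ^ 2 ≤ (n : ℝ))
    (k : ℕ) (hk1 : 1 ≤ k) (hk2 : (k : ℝ) ≤ C * Real.sqrt n) :
    -((k : ℝ) ^ 2 / (2 * n)) - 15 * (k : ℝ) ^ 3 / (n : ℝ) ^ 2
        ≤ Real.log ((1 - (k : ℝ) / n) ^ (n - k) / (1 - 2 * (k : ℝ) / n) ^ (n / 2 - k))
    ∧ Real.log ((1 - (k : ℝ) / n) ^ (n - k) / (1 - 2 * (k : ℝ) / n) ^ (n / 2 - k))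
        ≤ -((k : ℝ) ^ 2 / (2 * n)) + 15 * (k : ℝ) ^ 3 / (n : ℝ) ^ 2 :=
  stirling_ratio_taylor_general C n hev hn k hk1 hk2
end

section
/- Regret of an algorithm alternating between FTL and a backup algorithm: in the general online learning setting with 0 ≤ ℓ_t(a) ≤ 1 for all t and a, let K ≥ 1 and let 1 = t_1 ≤ τ_1 < t_2 ≤ τ_2 < ⋯ < t_K ≤ τ_K ≤ n be integers, and set t_{K+1} := n + 1. Let (a_1, …, a_n) be an action sequence such that a_t = a*_{t−1} for every t in an FTL interval [t_z, τ_z] (1 ≤ z ≤ K); the actions on the complementary intervals [τ_z + 1, t_{z+1} − 1] are arbitrary. Then Reg ≤ ∑_{z=1}^K ( Σ_{t_z : τ_z − 1} + R_z + 1 ), where Σ_{t_z : τ_z − 1} := ∑_{i = t_z}^{τ_z − 1} (L_i(a*_{i−1}) − L_i(a*_i)) and R_z := ∑_{t = τ_z + 1}^{t_{z+1} − 1} ℓ_t(a_t) − inf_{a ∈ A} ∑_{t = τ_z + 1}^{t_{z+1} − 1} ℓ_t(a). -/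
open Finset

private lemma tele_sum (F g : ℕ → ℝ) (s m : ℕ) (hm : s ≤ m)
    (hg : ∀ i, s < i → i ≤ m → g i = F i - F (i - 1)) :
    ∑ i ∈ Finset.Ioc s m, g i = F m - F s := by
  induction m, hm using Nat.le_induction with
  | base => simp
  | succ m hm ih =>
      rw [Finset.sum_Ioc_succ_top hm, ih (fun i h1 h2 => hg i h1 (by omega)),
        hg (m+1) (by omega) le_rfl]
      simp

/-- **Regret of an algorithm alternating between FTL and a backup algorithm.**
Losses in `[0,1]`; `1 = t 1 ≤ τ 1 < t 2 ≤ τ 2 < ⋯ < t K ≤ τ K ≤ n`, `t (K+1) = n+1`.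
If the action sequence plays FTL on each interval `[t z, τ z]`, then its regret is at
most `∑_{z=1}^K (Σ_{t z : τ z - 1} + R z + 1)`, where
`Σ_{t z : τ z - 1} = ∑_{i = t z}^{τ z - 1} (L i (astar (i-1)) - L i (astar i))` and
`R z` is the regret of the played actions on the interval `[τ z + 1, t (z+1) - 1]`
against the best fixed action for that interval. -/
theorem alternating_ftl_backup_regret
    {A : Type*} [Nonempty A] (n : ℕ) (hn : 1 ≤ n)
    (ℓ : ℕ → A → ℝ)
    (hℓ : ∀ i ∈ Finset.Icc 1 n, ∀ b : A, ℓ i b ∈ Set.Icc (0 : ℝ) 1)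
    (astar : ℕ → A)
    (hmin : ∀ i ∈ Finset.Icc 1 n, ∀ b : A,
      ∑ j ∈ Finset.Icc 1 i, ℓ j (astar i) ≤ ∑ j ∈ Finset.Icc 1 i, ℓ j b)
    (K : ℕ) (hK : 1 ≤ K) (t τ : ℕ → ℕ)
    (ht1 : t 1 = 1)
    (htτ : ∀ z ∈ Finset.Icc 1 K, t z ≤ τ z)
    (hτt : ∀ z ∈ Finset.Icc 1 (K - 1), τ z < t (z + 1))
    (hτK : τ K ≤ n) (htK1 : t (K + 1) = n + 1)
    (a : ℕ → A)
    (ha : ∀ z ∈ Finset.Icc 1 K, ∀ i ∈ Finset.Icc (t z) (τ z), a i = astar (i - 1)) :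
    (∑ i ∈ Finset.Icc 1 n, ℓ i (a i)) - ∑ i ∈ Finset.Icc 1 n, ℓ i (astar n)
      ≤ ∑ z ∈ Finset.Icc 1 K,
          ((∑ i ∈ Finset.Icc (t z) (τ z - 1),
              ((∑ j ∈ Finset.Icc 1 i, ℓ j (astar (i - 1)))
                - ∑ j ∈ Finset.Icc 1 i, ℓ j (astar i)))
            + ((∑ i ∈ Finset.Icc (τ z + 1) (t (z + 1) - 1), ℓ i (a i))
                - ⨅ b : A, ∑ i ∈ Finset.Icc (τ z + 1) (t (z + 1) - 1), ℓ i b)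
            + 1) := by
  have hIcc : ∀ m : ℕ, Finset.Icc 1 m = Finset.Ioc 0 m := fun m => Finset.Icc_add_one_left_eq_Ioc 0 m
  set L : ℕ → A → ℝ := fun m b => ∑ j ∈ Finset.Ioc 0 m, ℓ j b with hL
  set S : ℕ → ℝ := fun m => ∑ i ∈ Finset.Ioc 0 m, ℓ i (a i) with hS
  set F : ℕ → ℝ := fun m => L m (astar m) with hF
  set B : ℕ → ℝ := fun z =>
      ((∑ i ∈ Finset.Icc (t z) (τ z - 1),
          ((∑ j ∈ Finset.Icc 1 i, ℓ j (astar (i - 1)))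
            - ∑ j ∈ Finset.Icc 1 i, ℓ j (astar i)))
        + ((∑ i ∈ Finset.Icc (τ z + 1) (t (z + 1) - 1), ℓ i (a i))
            - ⨅ b : A, ∑ i ∈ Finset.Icc (τ z + 1) (t (z + 1) - 1), ℓ i b)
        + 1) with hB
  -- minimality of astar in terms of L
  have hmin' : ∀ i, 1 ≤ i → i ≤ n → ∀ b : A, L i (astar i) ≤ L i b := by
    intro i h1 h2 b
    have := hmin i (Finset.mem_Icc.2 ⟨h1, h2⟩) b
    simpa [hL, hIcc] using this
  have hmin'' : ∀ i, i ≤ n → ∀ b : A, L i (astar i) ≤ L i b := by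
    intro i h2 b
    rcases Nat.eq_zero_or_pos i with h | h
    · simp [hL, h]
    · exact hmin' i h h2 b
  -- chain facts
  have hpos : ∀ z, 1 ≤ z → z ≤ K → 1 ≤ t z := by
    intro z h1 h2
    induction z with
    | zero => omega
    | succ z ih =>
        rcases Nat.eq_zero_or_pos z with h | h
        · have h0 : z + 1 = 1 := by omega
          rw [h0, ht1]
        · have hz : z ≤ K - 1 := by omega
          have h3 := hτt z (Finset.mem_Icc.2 ⟨h, hz⟩)
          have h4 := htτ z (Finset.mem_Icc.2 ⟨h, by omega⟩)
          have := ih h (by omega)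
          omega
  have hub : ∀ d z, 1 ≤ z → z + d = K → τ z ≤ n := by
    intro d
    induction d with
    | zero =>
        intro z h1 h2
        have hzK : z = K := by omega
        subst hzK; exact hτK
    | succ d ih =>
        intro z h1 h2
        have h3 := hτt z (Finset.mem_Icc.2 ⟨h1, by omega⟩)
        have h4 := htτ (z+1) (Finset.mem_Icc.2 ⟨by omega, by omega⟩)
        have := ih (z+1) (by omega) (by omega)
        omega
  have hub' : ∀ z, 1 ≤ z → z ≤ K → τ z ≤ n := by
    intro z h1 h2; exact hub (K - z) z h1 (by omega)
  have htub : ∀ z, 1 ≤ z → z ≤ K → t (z + 1) ≤ n + 1 := by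
    intro z h1 h2
    rcases eq_or_lt_of_le h2 with h | h
    · subst h; omega
    · have h3 := hτt z (Finset.mem_Icc.2 ⟨h1, by omega⟩)
      have h4 := htτ (z+1) (Finset.mem_Icc.2 ⟨by omega, by omega⟩)
      have := hub' (z+1) (by omega) (by omega)
      omega
  have hτe : ∀ z, 1 ≤ z → z ≤ K → τ z ≤ t (z + 1) - 1 := by
    intro z h1 h2
    rcases eq_or_lt_of_le h2 with h | h
    · subst h; omega
    · have h3 := hτt z (Finset.mem_Icc.2 ⟨h1, by omega⟩); omega
  -- main induction
  have main : ∀ z, z ≤ K →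
      S (t (z + 1) - 1) ≤ F (t (z + 1) - 1) + ∑ w ∈ Finset.Icc 1 z, B w := by
    intro z
    induction z with
    | zero =>
        intro _
        simp [ht1, hS, hF, hL]
    | succ z ih =>
        intro hzK
        have hz1K : 1 ≤ z + 1 := by omega
        set s := t (z + 1) with hs
        set u := τ (z + 1) with hu
        set e := t (z + 1 + 1) - 1 with he
        have hs1 : 1 ≤ s := hpos (z+1) hz1K hzK
        have hsu : s ≤ u := htτ (z+1) (Finset.mem_Icc.2 ⟨hz1K, hzK⟩)
        have hun : u ≤ n := hub' (z+1) hz1K hzK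
        have hue : u ≤ e := hτe (z+1) hz1K hzK
        have hen : e ≤ n := by have := htub (z+1) hz1K hzK; omega
        have ihz := ih (by omega)
        -- FTL part
        have hsplit1 : S u = S (s - 1) + ∑ i ∈ Finset.Ioc (s-1) u, ℓ i (a i) := by
          rw [hS]
          exact (Finset.sum_Ioc_consecutive _ (Nat.zero_le _) (by omega)).symm
        have hftl : ∀ i ∈ Finset.Ioc (s-1) u, ℓ i (a i) = ℓ i (astar (i-1)) := by
          intro i hi
          rw [Finset.mem_Ioc] at hi
          exact congrArg (ℓ i) (ha (z+1) (Finset.mem_Icc.2 ⟨hz1K, hzK⟩) i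
            (Finset.mem_Icc.2 ⟨by omega, hi.2⟩))
        have hLstep : ∀ i, 1 ≤ i → ∀ b, L i b = L (i-1) b + ℓ i b := by
          intro i h1 b
          have h2 := Finset.sum_Ioc_succ_top (Nat.zero_le (i-1)) (fun j => ℓ j b)
          simp only [show (i-1)+1 = i from by omega] at h2
          simpa [hL] using h2
        have htele : ∑ i ∈ Finset.Ioc (s-1) u,
            (ℓ i (astar (i-1)) - (L i (astar (i-1)) - L i (astar i)))
            = F u - F (s-1) := by
          apply tele_sum
          · omega
          · intro i h1 h2
            have hi1 : 1 ≤ i := by omega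
            rw [hF]
            rw [hLstep i hi1 (astar (i-1))]
            ring
        have hsum_eq : ∑ i ∈ Finset.Ioc (s-1) u, ℓ i (astar (i-1))
            = F u - F (s-1) + ∑ i ∈ Finset.Ioc (s-1) u, (L i (astar (i-1)) - L i (astar i)) := by
          rw [← htele, Finset.sum_sub_distrib]; ring
        have hDsplit : ∑ i ∈ Finset.Ioc (s-1) u, (L i (astar (i-1)) - L i (astar i))
            = (∑ i ∈ Finset.Ioc (s-1) (u-1), (L i (astar (i-1)) - L i (astar i)))
              + (L u (astar (u-1)) - L u (astar u)) := by
          have h2 := Finset.sum_Ioc_succ_top (show s-1 ≤ u-1 by omega)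
            (fun i => L i (astar (i-1)) - L i (astar i))
          simp only [show (u-1)+1 = u from by omega] at h2
          simpa using h2
        have hDu : L u (astar (u-1)) - L u (astar u) ≤ 1 := by
          have h1 : L (u-1) (astar (u-1)) ≤ L (u-1) (astar u) :=
            hmin'' (u-1) (by omega) (astar u)
          have hu1 : 1 ≤ u := by omega
          have h2 := hℓ u (Finset.mem_Icc.2 ⟨hu1, hun⟩) (astar (u-1))
          have h3 := hℓ u (Finset.mem_Icc.2 ⟨hu1, hun⟩) (astar u)
          rw [hLstep u hu1 (astar (u-1)), hLstep u hu1 (astar u)]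
          rcases h2 with ⟨_, h2b⟩
          rcases h3 with ⟨h3a, _⟩
          linarith
        -- backup part
        have hsplit2 : S e = S u + ∑ i ∈ Finset.Ioc u e, ℓ i (a i) := by
          rw [hS]
          exact (Finset.sum_Ioc_consecutive _ (Nat.zero_le _) hue).symm
        have hbdd : BddBelow (Set.range fun b : A => ∑ i ∈ Finset.Icc (u+1) e, ℓ i b) := by
          refine ⟨0, ?_⟩
          rintro x ⟨b, rfl⟩
          apply Finset.sum_nonneg
          intro i hi
          rw [Finset.mem_Icc] at hi
          exact (hℓ i (Finset.mem_Icc.2 ⟨by omega, by omega⟩) b).1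
        have hinf : (⨅ b : A, ∑ i ∈ Finset.Icc (u+1) e, ℓ i b)
            ≤ ∑ i ∈ Finset.Icc (u+1) e, ℓ i (astar e) := ciInf_le hbdd (astar e)
        have hIoc_ue : Finset.Icc (u+1) e = Finset.Ioc u e := Finset.Icc_add_one_left_eq_Ioc u e
        have hFu_le : L u (astar u) ≤ L u (astar e) := hmin'' u hun (astar e)
        have hFe : L u (astar e) + ∑ i ∈ Finset.Ioc u e, ℓ i (astar e) = F e := by
          rw [hF, hL]
          exact Finset.sum_Ioc_consecutive _ (Nat.zero_le _) hue
        -- sum over blocks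
        have hC : ∑ w ∈ Finset.Icc 1 (z+1), B w
            = (∑ w ∈ Finset.Icc 1 z, B w) + B (z+1) := by
          rw [hIcc (z+1), hIcc z]
          exact Finset.sum_Ioc_succ_top (Nat.zero_le _) B
        -- rewrite B (z+1)
        have hBz : B (z+1) = (∑ i ∈ Finset.Ioc (s-1) (u-1), (L i (astar (i-1)) - L i (astar i)))
            + ((∑ i ∈ Finset.Ioc u e, ℓ i (a i))
                - ⨅ b : A, ∑ i ∈ Finset.Icc (u+1) e, ℓ i b) + 1 := by
          rw [hB]
          have h1 : Finset.Icc s (u-1) = Finset.Ioc (s-1) (u-1) := by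
            have h2 := Finset.Icc_add_one_left_eq_Ioc (s-1) (u-1)
            simpa [show s-1+1 = s by omega] using h2
          simp only [← hs, ← hu, ← he]
          rw [h1, hIoc_ue]
          simp [hL, hIcc]
        -- combine
        rw [hC, hBz]
        rw [Finset.sum_congr rfl hftl] at hsplit1
        rw [hsum_eq, hDsplit] at hsplit1
        rw [hsplit2, hsplit1]
        have hinf' : (⨅ b : A, ∑ i ∈ Finset.Icc (u+1) e, ℓ i b)
            ≤ ∑ i ∈ Finset.Ioc u e, ℓ i (astar e) := by
          rw [← hIoc_ue]; exact hinf
        linarith [ihz, hinf', hDu, hFu_le, hFe]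
  have hfin := main K le_rfl
  rw [htK1] at hfin
  simp only [Nat.add_sub_cancel] at hfin
  have hSn : S n = ∑ i ∈ Finset.Icc 1 n, ℓ i (a i) := by rw [hS, hIcc]
  have hFn : F n = ∑ i ∈ Finset.Icc 1 n, ℓ i (astar n) := by rw [hF, hL, hIcc]
  rw [← hSn, ← hFn]
  have hBsum : ∑ w ∈ Finset.Icc 1 K, B w = ∑ z ∈ Finset.Icc 1 K,
          ((∑ i ∈ Finset.Icc (t z) (τ z - 1),
              ((∑ j ∈ Finset.Icc 1 i, ℓ j (astar (i - 1)))
                - ∑ j ∈ Finset.Icc 1 i, ℓ j (astar i)))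
            + ((∑ i ∈ Finset.Icc (τ z + 1) (t (z + 1) - 1), ℓ i (a i))
                - ⨅ b : A, ∑ i ∈ Finset.Icc (τ z + 1) (t (z + 1) - 1), ℓ i b)
            + 1) := rfl
  rw [← hBsum]
  linarith
end

section
/- Riemann-sum sandwich for the Gaussian-weighted sum: let n ≥ 1 be an integer and M a real number with 2 ≤ M ≤ √n. Then n·(1 − e^{−(M−2)²/(2n)}) − 1 ≤ ∑_{k=0}^{⌊M⌋ − 1} k·e^{−k²/(2n)} ≤ n·(1 − e^{−M²/(2n)}). -/
/-!
The weight `f x = x e^{-x²/(2n)}` has antiderivative `-n e^{-x²/(2n)}` and increases on `[0, √n]`.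
With `m = ⌊M⌋`, the sum is therefore a left Riemann sum for `∫₀^m f = n(1 - e^{-m²/(2n)})`,
and, because its `k = 0` term vanishes, also a right Riemann sum for `∫₀^{m-1} f`.
It remains to use `m ≤ M` and `M - 2 ≤ m - 1`.
-/

open Real Set Finset

section GaussianWeight

variable {c : ℝ}

lemma hasDerivAt_neg_mul_exp_neg_sq_div (hc : c ≠ 0) (x : ℝ) :
    HasDerivAt (fun y => -c * exp (-y ^ 2 / (2 * c))) (x * exp (-x ^ 2 / (2 * c))) x :=
  (((hasDerivAt_pow 2 x).fun_neg.div_const (2 * c)).exp.const_mul (-c)).congr_deriv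
    (by field_simp; ring)

lemma hasDerivAt_mul_exp_neg_sq_div (hc : c ≠ 0) (x : ℝ) :
    HasDerivAt (fun y => y * exp (-y ^ 2 / (2 * c)))
      (exp (-x ^ 2 / (2 * c)) * (1 - x ^ 2 / c)) x :=
  ((hasDerivAt_id' x).fun_mul ((hasDerivAt_pow 2 x).fun_neg.div_const (2 * c)).exp).congr_deriv
    (by field_simp; ring)

lemma integral_mul_exp_neg_sq_div (hc : c ≠ 0) (a b : ℝ) :
    ∫ x in a..b, x * exp (-x ^ 2 / (2 * c))
      = c * (exp (-a ^ 2 / (2 * c)) - exp (-b ^ 2 / (2 * c))) := by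
  have hcont : Continuous fun x => x * exp (-x ^ 2 / (2 * c)) := by fun_prop
  rw [intervalIntegral.integral_eq_sub_of_hasDerivAt
    (fun x _ => hasDerivAt_neg_mul_exp_neg_sq_div hc x) (hcont.intervalIntegrable a b)]
  ring

lemma monotoneOn_mul_exp_neg_sq_div (hc : 0 < c) :
    MonotoneOn (fun x => x * exp (-x ^ 2 / (2 * c))) (Icc 0 √c) := by
  refine monotoneOn_of_hasDerivWithinAt_nonneg (convex_Icc 0 √c) (by fun_prop)
    (fun x _ => (hasDerivAt_mul_exp_neg_sq_div hc.ne' x).hasDerivWithinAt) ?_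
  rw [interior_Icc]
  rintro x ⟨hx0, hxc⟩
  have hx2 : x ^ 2 < c := by
    simpa [sq_sqrt hc.le] using pow_lt_pow_left₀ hxc hx0.le two_ne_zero
  have : 0 ≤ 1 - x ^ 2 / c := by rw [sub_nonneg, div_le_one hc]; exact hx2.le
  positivity

lemma mul_one_sub_exp_neg_sq_div_le (hc : 0 < c) {a b : ℝ} (ha : 0 ≤ a) (hab : a ≤ b) :
    c * (1 - exp (-a ^ 2 / (2 * c))) ≤ c * (1 - exp (-b ^ 2 / (2 * c))) := by
  gcongr

lemma sum_range_mul_exp_neg_sq_div_le (hc : 0 < c) {m : ℕ} (hm : (m : ℝ) ≤ √c) :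
    ∑ k ∈ range m, (k : ℝ) * exp (-(k : ℝ) ^ 2 / (2 * c))
      ≤ c * (1 - exp (-(m : ℝ) ^ 2 / (2 * c))) := by
  have hmono := (monotoneOn_mul_exp_neg_sq_div hc).mono
    (Icc_subset_Icc_right (by simpa using hm) : Icc (0 : ℝ) (0 + m) ⊆ Icc 0 √c)
  simpa [integral_mul_exp_neg_sq_div hc.ne'] using hmono.sum_le_integral

lemma mul_one_sub_exp_neg_sq_div_le_sum_range (hc : 0 < c) {m : ℕ} (hm : (m : ℝ) ≤ √c) :
    c * (1 - exp (-(m : ℝ) ^ 2 / (2 * c)))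
      ≤ ∑ k ∈ range (m + 1), (k : ℝ) * exp (-(k : ℝ) ^ 2 / (2 * c)) := by
  have hmono := (monotoneOn_mul_exp_neg_sq_div hc).mono
    (Icc_subset_Icc_right (by simpa using hm) : Icc (0 : ℝ) (0 + m) ⊆ Icc 0 √c)
  simpa [sum_range_succ', integral_mul_exp_neg_sq_div hc.ne'] using hmono.integral_le_sum

end GaussianWeight

/-- **Riemann-sum sandwich for the Gaussian-weighted sum.** For an integer `n ≥ 1` and
a real `2 ≤ M ≤ √n`,
`n(1 - e^{-(M-2)²/(2n)}) - 1 ≤ ∑_{k=0}^{⌊M⌋-1} k e^{-k²/(2n)} ≤ n(1 - e^{-M²/(2n)})`. -/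
theorem gaussian_riemann_sandwich
    (n : ℕ) (hn : 1 ≤ n) (M : ℝ) (hM2 : 2 ≤ M) (hMn : M ≤ Real.sqrt n) :
    (n : ℝ) * (1 - Real.exp (-((M - 2) ^ 2) / (2 * n))) - 1
        ≤ ∑ k ∈ Finset.range (Nat.floor M),
            (k : ℝ) * Real.exp (-((k : ℝ) ^ 2) / (2 * n))
    ∧ ∑ k ∈ Finset.range (Nat.floor M),
          (k : ℝ) * Real.exp (-((k : ℝ) ^ 2) / (2 * n))
        ≤ (n : ℝ) * (1 - Real.exp (-(M ^ 2) / (2 * n))) := by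
  have hn0 : (0 : ℝ) < n := by exact_mod_cast hn
  have hfloor_le : (⌊M⌋₊ : ℝ) ≤ M := Nat.floor_le (by linarith)
  obtain ⟨p, hp⟩ : ∃ p, ⌊M⌋₊ = p + 1 := Nat.exists_eq_add_one.mpr (Nat.floor_pos.mpr (by linarith))
  have hp_cast : (⌊M⌋₊ : ℝ) = p + 1 := by exact_mod_cast hp
  have hMp : M - 2 ≤ p := by linarith [Nat.lt_floor_add_one M]
  constructor
  · have hlower := mul_one_sub_exp_neg_sq_div_le_sum_range hn0 (m := p) (by linarith)
    rw [hp]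
    linarith [mul_one_sub_exp_neg_sq_div_le hn0 (by linarith) hMp]
  · exact (sum_range_mul_exp_neg_sq_div_le hn0 (hfloor_le.trans hMn)).trans
      (mul_one_sub_exp_neg_sq_div_le hn0 (Nat.cast_nonneg _) hfloor_le)
end
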